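/- arXiv:2001.02848 — 3 statements merged into one kernel-verified Lean document; each statement's English description precedes it below -/
import Mathlib

section
/- Let H be a Hopf algebra over a field k and B an S(H)-simple left H-module algebra. If K is a simple right ideal of B and V is any nonzero right B-module, then there exists a finite-dimensional right H-comodule U such that K embeds as a right B-module into U ⊗ V equipped with the twisted action (u ⊗ v)a = Σ u₍₀₎ ⊗ v(S(u₍₁₎)a). -/
open TensorProduct

/-- `act` makes the `k`-algebra `A` into a left `H`-module algebra:
`h ⊳ (a b) = ∑ (h₍₁₎ ⊳ a)(h₍₂₎ ⊳ b)` and `h ⊳ 1 = ε(h) 1`, together with the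
left `H`-module axioms. -/
def IsModuleAlgebra (k : Type*) [Field k] {H A : Type*} [Ring H] [HopfAlgebra k H]
    [Ring A] [Algebra k A] (act : H →ₗ[k] A →ₗ[k] A) : Prop :=
  (∀ g h : H, act (g * h) = (act g) ∘ₗ (act h)) ∧
  (act 1 = LinearMap.id) ∧
  (∀ (h : H) (a b : A),
    act h (a * b) =
      LinearMap.mul' k A ((TensorProduct.map (act.flip a) (act.flip b))
        (Coalgebra.comul h))) ∧
  (∀ h : H, act h 1 = Coalgebra.counit (R := k) h • (1 : A))

/-- `γ : U → U ⊗ H` is a right `H`-comodule structure on `U` (coassociativity and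
counit axioms). -/
def IsRightComodule (k : Type*) [Field k] {H U : Type*} [Ring H] [HopfAlgebra k H]
    [AddCommGroup U] [Module k U] (γ : U →ₗ[k] U ⊗[k] H) : Prop :=
  ((TensorProduct.assoc k U H H).toLinearMap ∘ₗ
      (TensorProduct.map γ LinearMap.id) ∘ₗ γ =
    (TensorProduct.map LinearMap.id Coalgebra.comul) ∘ₗ γ) ∧
  ((TensorProduct.rid k U).toLinearMap ∘ₗ
      (TensorProduct.map LinearMap.id (Coalgebra.counit (R := k))) ∘ₗ γ =
    LinearMap.id)

/-- `ψ` is a right action of the `k`-algebra `B` on `V`. -/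
def IsRightAction (k : Type*) [Field k] {B V : Type*} [Ring B] [Algebra k B]
    [AddCommGroup V] [Module k V] (ψ : B →ₗ[k] V →ₗ[k] V) : Prop :=
  ψ 1 = LinearMap.id ∧ ∀ a b : B, ψ (a * b) = (ψ b) ∘ₗ (ψ a)

/-- The twisted action of `a ∈ B` on `U ⊗ V`: `(u ⊗ v)·a = ∑ u₍₀₎ ⊗ v(S(u₍₁₎)a)`. -/
noncomputable def twistAct (k : Type*) [Field k] {H B U V : Type*} [Ring H]
    [HopfAlgebra k H] [Ring B] [Algebra k B] [AddCommGroup U] [Module k U]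
    [AddCommGroup V] [Module k V] (act : H →ₗ[k] B →ₗ[k] B)
    (γ : U →ₗ[k] U ⊗[k] H) (ψ : B →ₗ[k] V →ₗ[k] V) (a : B) :
    U ⊗[k] V →ₗ[k] U ⊗[k] V :=
  (TensorProduct.map LinearMap.id
      (TensorProduct.lift (ψ ∘ₗ act.flip a ∘ₗ HopfAlgebra.antipode (R := k)))) ∘ₗ
    (TensorProduct.assoc k U H V).toLinearMap ∘ₗ (TensorProduct.map γ LinearMap.id)

/-- A subset of a ring `A` is a right ideal. -/
def IsRightIdeal {A : Type*} [Ring A] (I : Set A) : Prop :=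
  (0 : A) ∈ I ∧ (∀ x ∈ I, ∀ y ∈ I, x + y ∈ I) ∧ (∀ x ∈ I, ∀ a : A, x * a ∈ I)

/-- A subset of a ring is a two-sided ideal. -/
def IsTwoSidedIdealSet {A : Type*} [Ring A] (T : Set A) : Prop :=
  (0 : A) ∈ T ∧ (∀ x ∈ T, ∀ y ∈ T, x + y ∈ T) ∧ (∀ x ∈ T, -x ∈ T) ∧
    (∀ x ∈ T, ∀ a : A, x * a ∈ T ∧ a * x ∈ T)

/-- `B` is `S(H)`-simple: `B ≠ 0` and the only `S(H)`-stable two-sided ideals of `B`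
are `0` and `B`. -/
def IsSHSimple (k : Type*) [Field k] {H B : Type*} [Ring H] [HopfAlgebra k H]
    [Ring B] [Algebra k B] (act : H →ₗ[k] B →ₗ[k] B) : Prop :=
  Nontrivial B ∧
    ∀ T : Set B, IsTwoSidedIdealSet T →
      (∀ h : H, (∃ g : H, HopfAlgebra.antipode (R := k) g = h) → ∀ t ∈ T, act h t ∈ T) →
      T = {0} ∨ T = Set.univ


open Coalgebra LinearMap HopfAlgebra

open TensorProduct Coalgebra LinearMap

section Conv

variable (k : Type*) [Field k] {C : Type*} [AddCommGroup C] [Module k C] [Coalgebra k C]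
  (A : Type*) [Ring A] [Algebra k A]

/-- Convolution product on `Hom(C, A)`. -/
noncomputable def conv (f g : C →ₗ[k] A) : C →ₗ[k] A :=
  LinearMap.mul' k A ∘ₗ TensorProduct.map f g ∘ₗ Coalgebra.comul

/-- Convolution unit. -/
noncomputable def convOne : C →ₗ[k] A := Algebra.linearMap k A ∘ₗ Coalgebra.counit

variable {k A}

lemma conv_repr (f g : C →ₗ[k] A) {a : C} (r : Coalgebra.Repr k a (C × C)) :
    conv k A f g a = ∑ i ∈ r.index, f (r.left i) * g (r.right i) := by
  simp only [conv, LinearMap.comp_apply, ← r.eq, map_sum, TensorProduct.map_tmul,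
    LinearMap.mul'_apply]

lemma sum_smul_counit_left {a : C} (r : Coalgebra.Repr k a (C × C)) :
    ∑ i ∈ r.index, Coalgebra.counit (R := k) (r.right i) • r.left i = a := by
  have h := congrArg (TensorProduct.rid k C) (Coalgebra.sum_tmul_counit_eq r)
  rw [map_sum] at h
  simp only [TensorProduct.rid_tmul] at h
  rwa [one_smul] at h

lemma sum_counit_smul_right {a : C} (r : Coalgebra.Repr k a (C × C)) :
    ∑ i ∈ r.index, Coalgebra.counit (R := k) (r.left i) • r.right i = a := by
  have h := congrArg (TensorProduct.lid k C) (Coalgebra.sum_counit_tmul_eq r)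
  rw [map_sum] at h
  simp only [TensorProduct.lid_tmul] at h
  rwa [one_smul] at h

lemma _root_.convOne_apply (a : C) : (convOne k A) a = Coalgebra.counit (R := k) a • 1 := by
  simp [_root_.convOne, Algebra.algebraMap_eq_smul_one]

lemma conv_convOne (f : C →ₗ[k] A) : conv k A f (convOne k A) = f := by
  ext a
  let r := Coalgebra.Repr.arbitrary k a
  rw [conv_repr f (convOne k A) r]
  calc ∑ i ∈ r.index, f (r.left i) * (convOne k A) (r.right i)
      = ∑ i ∈ r.index, f (Coalgebra.counit (R := k) (r.right i) • r.left i) := by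
        apply Finset.sum_congr rfl; intro i _
        rw [_root_.convOne_apply, mul_smul_comm, mul_one, map_smul]
    _ = f a := by rw [← map_sum, sum_smul_counit_left r]

lemma convOne_conv (f : C →ₗ[k] A) : conv k A (convOne k A) f = f := by
  ext a
  let r := Coalgebra.Repr.arbitrary k a
  rw [conv_repr (convOne k A) f r]
  calc ∑ i ∈ r.index, (convOne k A) (r.left i) * f (r.right i)
      = ∑ i ∈ r.index, f (Coalgebra.counit (R := k) (r.left i) • r.right i) := by
        apply Finset.sum_congr rfl; intro i _
        rw [_root_.convOne_apply, smul_mul_assoc, one_mul, map_smul]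
    _ = f a := by rw [← map_sum, sum_counit_smul_right r]

lemma conv_assoc (f g h : C →ₗ[k] A) :
    conv k A (conv k A f g) h = conv k A f (conv k A g h) := by
  ext a
  let r := Coalgebra.Repr.arbitrary k a
  let a₁ : (i : r.ι) → Coalgebra.Repr k (r.left i) (C × C) := fun i => Coalgebra.Repr.arbitrary k _
  let a₂ : (i : r.ι) → Coalgebra.Repr k (r.right i) (C × C) := fun i => Coalgebra.Repr.arbitrary k _
  rw [conv_repr (conv k A f g) h r, conv_repr f (conv k A g h) r]
  have key := Coalgebra.sum_tmul_tmul_eq r a₁ a₂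
  have key2 := congrArg (LinearMap.mul' k A ∘ₗ
    LinearMap.lTensor A (LinearMap.mul' k A) ∘ₗ
    TensorProduct.map f (TensorProduct.map g h)) key
  simp only [map_sum, LinearMap.comp_apply, TensorProduct.map_tmul,
    LinearMap.lTensor_tmul, LinearMap.mul'_apply] at key2
  calc ∑ i ∈ r.index, conv k A f g (r.left i) * h (r.right i)
      = ∑ i ∈ r.index, ∑ j ∈ (a₁ i).index,
          f ((a₁ i).left j) * (g ((a₁ i).right j) * h (r.right i)) := by
        apply Finset.sum_congr rfl; intro i _
        rw [conv_repr f g (a₁ i), Finset.sum_mul]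
        exact Finset.sum_congr rfl fun j _ => mul_assoc _ _ _
    _ = ∑ i ∈ r.index, ∑ j ∈ (a₂ i).index,
          f (r.left i) * (g ((a₂ i).left j) * h ((a₂ i).right j)) := key2
    _ = ∑ i ∈ r.index, f (r.left i) * conv k A g h (r.right i) := by
        apply Finset.sum_congr rfl; intro i _
        rw [conv_repr g h (a₂ i), Finset.mul_sum]

lemma conv_cancel (f d g : C →ₗ[k] A) (h1 : conv k A f d = convOne k A)
    (h2 : conv k A d g = convOne k A) : f = g := by
  have : conv k A f (conv k A d g) = conv k A (conv k A f d) g := (conv_assoc f d g).symm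
  rw [h1, h2, conv_convOne, convOne_conv] at this
  exact this

lemma conv_add_left (f f' g : C →ₗ[k] A) :
    conv k A (f + f') g = conv k A f g + conv k A f' g := by
  unfold conv
  rw [TensorProduct.map_add_left]; ext x; simp

lemma conv_add_right (f g g' : C →ₗ[k] A) :
    conv k A f (g + g') = conv k A f g + conv k A f g' := by
  unfold conv
  rw [TensorProduct.map_add_right]; ext x; simp

lemma conv_smul_left (c : k) (f g : C →ₗ[k] A) :
    conv k A (c • f) g = c • conv k A f g := by
  unfold conv
  rw [TensorProduct.map_smul_left]; ext x; simp

lemma conv_smul_right (c : k) (f g : C →ₗ[k] A) :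
    conv k A f (c • g) = c • conv k A f g := by
  unfold conv
  rw [TensorProduct.map_smul_right]; ext x; simp

lemma conv_zero_left (g : C →ₗ[k] A) : conv k A 0 g = 0 := by
  unfold conv
  rw [TensorProduct.map_zero_left]; ext x; simp

lemma conv_zero_right (f : C →ₗ[k] A) : conv k A f 0 = 0 := by
  unfold conv
  rw [TensorProduct.map_zero_right]; ext x; simp
end Conv
section Hopf
variable {k : Type*} [Field k] {H : Type*} [Ring H] [HopfAlgebra k H]

local notation "S" => HopfAlgebra.antipode (R := k) (A := H)
local notation "Δ" => Coalgebra.comul (R := k) (A := H)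
local notation "ε" => Coalgebra.counit (R := k) (A := H)

lemma antipode_one' : S 1 = (1 : H) := by
  have h2 := HopfAlgebra.mul_antipode_rTensor_comul_apply (R := k) (A := H) 1
  simpa [Bialgebra.comul_one, Algebra.TensorProduct.one_def] using h2

-- mid lemma
lemma mid_lemma (a : H) (r : Coalgebra.Repr k a (H × H)) :
    ∑ i ∈ r.index, Coalgebra.comul (R := k) (r.left i) * ((1 : H) ⊗ₜ[k] S (r.right i))
      = a ⊗ₜ[k] (1 : H) := by
  classical
  let a₁ : (i : r.ι) → Coalgebra.Repr k (r.left i) (H × H) := fun i => Coalgebra.Repr.arbitrary k _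
  let a₂ : (i : r.ι) → Coalgebra.Repr k (r.right i) (H × H) := fun i => Coalgebra.Repr.arbitrary k _
  have key := Coalgebra.sum_tmul_tmul_eq r a₁ a₂
  have key2 := congrArg (LinearMap.lTensor H
    (LinearMap.mul' k H ∘ₗ LinearMap.lTensor H S)) key
  simp only [map_sum, LinearMap.lTensor_tmul, LinearMap.comp_apply,
    LinearMap.mul'_apply] at key2
  calc ∑ i ∈ r.index, Coalgebra.comul (R := k) (r.left i) * ((1:H) ⊗ₜ[k] S (r.right i))
      = ∑ i ∈ r.index, ∑ j ∈ (a₁ i).index,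
          (a₁ i).left j ⊗ₜ[k] ((a₁ i).right j * S (r.right i)) := by
        apply Finset.sum_congr rfl; intro i _
        rw [← (a₁ i).eq, Finset.sum_mul]
        exact Finset.sum_congr rfl fun j _ => by
          rw [Algebra.TensorProduct.tmul_mul_tmul, mul_one]
    _ = ∑ i ∈ r.index, ∑ j ∈ (a₂ i).index,
          r.left i ⊗ₜ[k] ((a₂ i).left j * S ((a₂ i).right j)) := key2
    _ = a ⊗ₜ[k] 1 := by
        have : ∀ i ∈ r.index, ∑ j ∈ (a₂ i).index,
            r.left i ⊗ₜ[k] ((a₂ i).left j * S ((a₂ i).right j))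
            = Coalgebra.counit (R := k) (r.right i) • (r.left i ⊗ₜ[k] (1:H)) := by
          intro i _
          rw [← TensorProduct.tmul_sum, HopfAlgebra.sum_mul_antipode_eq_smul (a₂ i),
            TensorProduct.tmul_smul]
        rw [Finset.sum_congr rfl this]
        have : ∀ x ∈ r.index, Coalgebra.counit (R := k) (r.right x) • (r.left x ⊗ₜ[k] (1:H))
            = (Coalgebra.counit (R := k) (r.right x) • r.left x) ⊗ₜ[k] (1:H) := by
          intro x _; rw [TensorProduct.smul_tmul']
        rw [Finset.sum_congr rfl this, ← TensorProduct.sum_tmul, sum_smul_counit_left r]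


noncomputable def Gmap : H →ₗ[k] H ⊗[k] H :=
  TensorProduct.map S S ∘ₗ (TensorProduct.comm k H H).toLinearMap ∘ₗ Coalgebra.comul

lemma Gmap_repr {h : H} (r : Coalgebra.Repr k h (H × H)) :
    (Gmap (k := k) (H := H)) h = ∑ i ∈ r.index, S (r.right i) ⊗ₜ[k] S (r.left i) := by
  simp only [Gmap, LinearMap.comp_apply, LinearEquiv.coe_coe, ← r.eq, map_sum,
    TensorProduct.comm_tmul, TensorProduct.map_tmul]

lemma claim1 : conv k (H ⊗[k] H) (Coalgebra.comul ∘ₗ S) Coalgebra.comul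
    = convOne k (H ⊗[k] H) := by
  ext h
  let r := Coalgebra.Repr.arbitrary k h
  rw [conv_repr _ _ r, _root_.convOne_apply]
  calc ∑ i ∈ r.index, (Coalgebra.comul ∘ₗ S) (r.left i) * Coalgebra.comul (r.right i)
      = ∑ i ∈ r.index, Coalgebra.comul (R := k) (S (r.left i) * r.right i) := by
        apply Finset.sum_congr rfl; intro i _
        rw [LinearMap.comp_apply, Bialgebra.comul_mul]
    _ = Coalgebra.comul (R := k) (∑ i ∈ r.index, S (r.left i) * r.right i) := by
        rw [map_sum]
    _ = Coalgebra.counit (R := k) h • 1 := by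
        rw [HopfAlgebra.sum_antipode_mul_eq_smul r, map_smul, Bialgebra.comul_one]

lemma claim2 : conv k (H ⊗[k] H) Coalgebra.comul (Gmap (k := k) (H := H))
    = convOne k (H ⊗[k] H) := by
  classical
  ext h
  let r := Coalgebra.Repr.arbitrary k h
  let a₁ : (i : r.ι) → Coalgebra.Repr k (r.left i) (H × H) := fun i => Coalgebra.Repr.arbitrary k _
  let a₂ : (i : r.ι) → Coalgebra.Repr k (r.right i) (H × H) := fun i => Coalgebra.Repr.arbitrary k _
  rw [conv_repr _ _ r, _root_.convOne_apply]
  -- Ψ : (H⊗H)⊗H → H⊗H,  t ⊗ v ↦ t * (S v ⊗ 1)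
  set ins1 : H →ₗ[k] H ⊗[k] H := ((TensorProduct.mk k H H).flip 1) ∘ₗ S with hins1
  set Ψ : (H ⊗[k] H) ⊗[k] H →ₗ[k] H ⊗[k] H :=
    LinearMap.mul' k (H ⊗[k] H) ∘ₗ LinearMap.lTensor (H ⊗[k] H) ins1 with hΨ
  have Ψ_apply : ∀ (t : H ⊗[k] H) (v : H), Ψ (t ⊗ₜ[k] v) = t * ((S v) ⊗ₜ[k] (1:H)) := by
    intro t v
    simp [hΨ, hins1, LinearMap.lTensor_tmul, LinearMap.mul'_apply]
  -- Θ' : H ⊗ (H ⊗ H) → (H⊗H)⊗H,  x ⊗ (u ⊗ v) ↦ (Δ x * (1 ⊗ S u)) ⊗ v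
  set ins0 : H →ₗ[k] H ⊗[k] H := (TensorProduct.mk k H H 1) ∘ₗ S with hins0
  set Θ : H ⊗[k] (H ⊗[k] H) →ₗ[k] (H ⊗[k] H) ⊗[k] H :=
    LinearMap.rTensor H (LinearMap.mul' k (H ⊗[k] H) ∘ₗ LinearMap.lTensor (H ⊗[k] H) ins0)
      ∘ₗ (TensorProduct.assoc k (H ⊗[k] H) H H).symm.toLinearMap
      ∘ₗ TensorProduct.map Coalgebra.comul LinearMap.id with hΘ
  have Θ_apply : ∀ (x u v : H), Θ (x ⊗ₜ[k] (u ⊗ₜ[k] v))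
      = (Coalgebra.comul (R := k) x * ((1:H) ⊗ₜ[k] S u)) ⊗ₜ[k] v := by
    intro x u v
    simp [hΘ, hins0, TensorProduct.assoc_symm_tmul, LinearMap.rTensor_tmul,
      LinearMap.lTensor_tmul, LinearMap.mul'_apply]
  have key := congrArg Θ (Coalgebra.sum_tmul_tmul_eq r a₁ a₂)
  simp only [map_sum, Θ_apply] at key
  -- key : Σ_i Σ_j (Δ p * (1 ⊗ S q)) ⊗ y_i = Σ_i Σ_j (Δ x_i * (1 ⊗ S u)) ⊗ v
  have keyL : ∑ i ∈ r.index, ∑ j ∈ (a₁ i).index,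
      (Coalgebra.comul (R := k) ((a₁ i).left j) * ((1:H) ⊗ₜ[k] S ((a₁ i).right j))) ⊗ₜ[k] r.right i
      = ∑ i ∈ r.index, (r.left i ⊗ₜ[k] (1:H)) ⊗ₜ[k] r.right i := by
    apply Finset.sum_congr rfl; intro i _
    rw [← TensorProduct.sum_tmul, mid_lemma (r.left i) (a₁ i)]
  rw [keyL] at key
  calc ∑ i ∈ r.index, Coalgebra.comul (r.left i) * Gmap (r.right i)
      = ∑ i ∈ r.index, ∑ j ∈ (a₂ i).index,
          Coalgebra.comul (R := k) (r.left i) * (S ((a₂ i).right j) ⊗ₜ[k] S ((a₂ i).left j)) := by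
        apply Finset.sum_congr rfl; intro i _
        rw [Gmap_repr (a₂ i), Finset.mul_sum]
    _ = Ψ (∑ i ∈ r.index, ∑ j ∈ (a₂ i).index,
          (Coalgebra.comul (R := k) (r.left i) * ((1:H) ⊗ₜ[k] S ((a₂ i).left j))) ⊗ₜ[k] (a₂ i).right j) := by
        rw [map_sum]
        apply Finset.sum_congr rfl; intro i _
        rw [map_sum]
        apply Finset.sum_congr rfl; intro j _
        rw [Ψ_apply, mul_assoc, Algebra.TensorProduct.tmul_mul_tmul, one_mul, mul_one]
    _ = Ψ (∑ i ∈ r.index, (r.left i ⊗ₜ[k] (1:H)) ⊗ₜ[k] r.right i) := by rw [← key]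
    _ = Coalgebra.counit (R := k) h • 1 := by
        rw [map_sum]
        have : ∀ i ∈ r.index, Ψ ((r.left i ⊗ₜ[k] (1:H)) ⊗ₜ[k] r.right i)
            = (r.left i * S (r.right i)) ⊗ₜ[k] (1:H) := by
          intro i _
          rw [Ψ_apply, Algebra.TensorProduct.tmul_mul_tmul, one_mul]
        rw [Finset.sum_congr rfl this, ← TensorProduct.sum_tmul,
          HopfAlgebra.sum_mul_antipode_eq_smul r, Algebra.TensorProduct.one_def,
          TensorProduct.smul_tmul']

set_option maxHeartbeats 800000 in
lemma comul_antipode : (Coalgebra.comul ∘ₗ S : H →ₗ[k] H ⊗[k] H) = Gmap := by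
  have h1 := claim1 (k := k) (H := H)
  have h2 := claim2 (k := k) (H := H)
  exact conv_cancel _ _ _ h1 h2

lemma comul_antipode_repr {h : H} (r : Coalgebra.Repr k h (H × H)) :
    Coalgebra.comul (R := k) (S h) = ∑ i ∈ r.index, S (r.right i) ⊗ₜ[k] S (r.left i) := by
  have := LinearMap.congr_fun (comul_antipode (k := k) (H := H)) h
  rw [LinearMap.comp_apply] at this
  rw [this, Gmap_repr r]
-- Convolution algebra structure on H →ₗ[k] H (type synonym to avoid the composition ring)
variable (k H) in
def CAlg : Type _ := H →ₗ[k] H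

noncomputable instance : AddCommGroup (CAlg k H) := inferInstanceAs (AddCommGroup (H →ₗ[k] H))
noncomputable instance : Module k (CAlg k H) := inferInstanceAs (Module k (H →ₗ[k] H))

variable (k H) in
def CAlg.of (f : H →ₗ[k] H) : CAlg k H := f
variable (k H) in
def CAlg.to (f : CAlg k H) : H →ₗ[k] H := f

noncomputable instance : Ring (CAlg k H) :=
  { (inferInstance : AddCommGroup (CAlg k H)) with
    mul := fun f g => CAlg.of k H (conv k H (CAlg.to k H f) (CAlg.to k H g))
    one := CAlg.of k H (convOne k H)
    mul_assoc := fun f g h => conv_assoc (CAlg.to k H f) (CAlg.to k H g) (CAlg.to k H h)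
    one_mul := fun f => convOne_conv (CAlg.to k H f)
    mul_one := fun f => conv_convOne (CAlg.to k H f)
    left_distrib := fun f g h => conv_add_right (CAlg.to k H f) (CAlg.to k H g) (CAlg.to k H h)
    right_distrib := fun f g h => conv_add_left (CAlg.to k H f) (CAlg.to k H g) (CAlg.to k H h)
    zero_mul := fun f => conv_zero_left (CAlg.to k H f)
    mul_zero := fun f => conv_zero_right (CAlg.to k H f) }

lemma CAlg.mul_def (f g : CAlg k H) :
    f * g = CAlg.of k H (conv k H (CAlg.to k H f) (CAlg.to k H g)) := rfl
lemma CAlg.one_def' : (1 : CAlg k H) = CAlg.of k H (convOne k H) := rfl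

noncomputable instance : Algebra k (CAlg k H) :=
  Algebra.ofModule
    (fun c f g => conv_smul_left c (CAlg.to k H f) (CAlg.to k H g))
    (fun c f g => conv_smul_right c (CAlg.to k H f) (CAlg.to k H g))

variable (k H) in
noncomputable def toC (F : H →ₗ[k] (H →ₗ[k] H)) : H →ₗ[k] CAlg k H where
  toFun := fun a => CAlg.of k H (F a)
  map_add' := fun x y => congrArg (CAlg.of k H) (F.map_add x y)
  map_smul' := fun c x => congrArg (CAlg.of k H) (F.map_smul c x)

lemma toC_apply (F : H →ₗ[k] (H →ₗ[k] H)) (a : H) : toC k H F a = CAlg.of k H (F a) := rfl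

variable (k H) in
noncomputable def muHat : H →ₗ[k] CAlg k H := toC k H (LinearMap.mul k H)

variable (k H) in
noncomputable def Pmap : H →ₗ[k] CAlg k H :=
  toC k H ((LinearMap.llcomp k H H H S) ∘ₗ LinearMap.mul k H)

variable (k H) in
noncomputable def Nmap : H →ₗ[k] CAlg k H :=
  toC k H ((LinearMap.lcomp k H S) ∘ₗ (LinearMap.mul k H).flip ∘ₗ S)

lemma conv_CAlg_apply (F G : H →ₗ[k] CAlg k H) {a b : H}
    (r : Coalgebra.Repr k a (H × H)) (rb : Coalgebra.Repr k b (H × H)) :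
    CAlg.to k H (conv k (CAlg k H) F G a) b =
      ∑ i ∈ r.index, ∑ j ∈ rb.index,
        (CAlg.to k H (F (r.left i))) (rb.left j) * (CAlg.to k H (G (r.right i))) (rb.right j) := by
  rw [conv_repr F G r]
  rw [show CAlg.to k H (∑ i ∈ r.index, F (r.left i) * G (r.right i))
      = ∑ i ∈ r.index, conv k H (CAlg.to k H (F (r.left i))) (CAlg.to k H (G (r.right i)))
    from rfl]
  rw [LinearMap.sum_apply]
  exact Finset.sum_congr rfl fun i _ => conv_repr _ _ rb

lemma convOne_CAlg_apply (a b : H) :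
    CAlg.to k H (convOne k (CAlg k H) a) b
      = Coalgebra.counit (R := k) a • (Coalgebra.counit (R := k) b • (1 : H)) := by
  rw [_root_.convOne_apply]
  rw [show CAlg.to k H (Coalgebra.counit (R := k) a • (1 : CAlg k H))
      = Coalgebra.counit (R := k) a • convOne k H from rfl]
  rw [LinearMap.smul_apply, _root_.convOne_apply]

/-- Repr of a product. -/
noncomputable def Coalgebra.Repr.mul' {a b : H} (r : Coalgebra.Repr k a (H × H))
    (rb : Coalgebra.Repr k b (H × H)) : Coalgebra.Repr k (a * b) ((H × H) × (H × H)) where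
  index := r.index ×ˢ rb.index
  left := fun p => r.left p.1 * rb.left p.2
  right := fun p => r.right p.1 * rb.right p.2
  eq := by
    rw [Finset.sum_product]
    rw [show (Coalgebra.comul (R := k) (a * b) : H ⊗[k] H)
        = Coalgebra.comul (R := k) a * Coalgebra.comul (R := k) b from Bialgebra.comul_mul a b]
    rw [← r.eq, ← rb.eq, Finset.sum_mul_sum]
    exact Finset.sum_congr rfl fun i _ => Finset.sum_congr rfl fun j _ =>
      (Algebra.TensorProduct.tmul_mul_tmul _ _ _ _).symm

lemma claimP : conv k (CAlg k H) (muHat k H) (Pmap k H) = convOne k (CAlg k H) := by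
  ext a
  show CAlg.to k H (conv k (CAlg k H) (muHat k H) (Pmap k H) a)
    = CAlg.to k H (convOne k (CAlg k H) a)
  ext b
  let r := Coalgebra.Repr.arbitrary k a
  let rb := Coalgebra.Repr.arbitrary k b
  rw [conv_CAlg_apply (muHat k H) (Pmap k H) r rb, convOne_CAlg_apply]
  have : ∀ i ∈ r.index, ∀ j ∈ rb.index,
      (CAlg.to k H ((muHat k H) (r.left i))) (rb.left j)
        * (CAlg.to k H ((Pmap k H) (r.right i))) (rb.right j)
      = (r.left i * rb.left j) * S (r.right i * rb.right j) := by
    intro i _ j _; rfl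
  calc ∑ i ∈ r.index, ∑ j ∈ rb.index,
        (CAlg.to k H ((muHat k H) (r.left i))) (rb.left j)
          * (CAlg.to k H ((Pmap k H) (r.right i))) (rb.right j)
      = ∑ i ∈ r.index, ∑ j ∈ rb.index,
          (r.left i * rb.left j) * S (r.right i * rb.right j) := by
        apply Finset.sum_congr rfl; intro i hi
        apply Finset.sum_congr rfl; intro j hj
        exact this i hi j hj
    _ = ∑ p ∈ (Coalgebra.Repr.mul' r rb).index,
          (Coalgebra.Repr.mul' r rb).left p * S ((Coalgebra.Repr.mul' r rb).right p) := by
        rw [show (Coalgebra.Repr.mul' r rb).index = r.index ×ˢ rb.index from rfl,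
          ← Finset.sum_product']
        exact Finset.sum_congr rfl fun p _ => rfl
    _ = Coalgebra.counit (R := k) (a * b) • (1 : H) :=
        HopfAlgebra.sum_mul_antipode_eq_smul (Coalgebra.Repr.mul' r rb)
    _ = Coalgebra.counit (R := k) a • (Coalgebra.counit (R := k) b • (1 : H)) := by
        rw [Bialgebra.counit_mul, smul_smul]

lemma claimN : conv k (CAlg k H) (Nmap k H) (muHat k H) = convOne k (CAlg k H) := by
  ext a
  show CAlg.to k H (conv k (CAlg k H) (Nmap k H) (muHat k H) a)
    = CAlg.to k H (convOne k (CAlg k H) a)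
  ext b
  let r := Coalgebra.Repr.arbitrary k a
  let rb := Coalgebra.Repr.arbitrary k b
  rw [conv_CAlg_apply (Nmap k H) (muHat k H) r rb, convOne_CAlg_apply]
  calc ∑ i ∈ r.index, ∑ j ∈ rb.index,
        (CAlg.to k H ((Nmap k H) (r.left i))) (rb.left j)
          * (CAlg.to k H ((muHat k H) (r.right i))) (rb.right j)
      = ∑ j ∈ rb.index, ∑ i ∈ r.index,
          S (rb.left j) * ((S (r.left i) * r.right i) * rb.right j) := by
        rw [Finset.sum_comm]
        apply Finset.sum_congr rfl; intro j _
        apply Finset.sum_congr rfl; intro i _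
        show (S (rb.left j) * S (r.left i)) * (r.right i * rb.right j) = _
        rw [mul_assoc, ← mul_assoc (S (r.left i))]
    _ = ∑ j ∈ rb.index, S (rb.left j) * ((Coalgebra.counit (R := k) a • (1:H)) * rb.right j) := by
        apply Finset.sum_congr rfl; intro j _
        rw [← Finset.mul_sum, ← Finset.sum_mul, HopfAlgebra.sum_antipode_mul_eq_smul r]
    _ = Coalgebra.counit (R := k) a • ∑ j ∈ rb.index, S (rb.left j) * rb.right j := by
        rw [Finset.smul_sum]
        apply Finset.sum_congr rfl; intro j _
        rw [smul_mul_assoc, one_mul, mul_smul_comm]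
    _ = Coalgebra.counit (R := k) a • (Coalgebra.counit (R := k) b • (1 : H)) := by
        rw [HopfAlgebra.sum_antipode_mul_eq_smul rb]

set_option maxHeartbeats 800000 in
lemma antipode_mul' (a b : H) : S (a * b) = S b * S a := by
  have h1 := claimN (k := k) (H := H)
  have h2 := claimP (k := k) (H := H)
  have hNP : Nmap k H = Pmap k H := conv_cancel _ _ _ h1 h2
  have := congrArg (CAlg.to k H) (LinearMap.congr_fun hNP a)
  have h3 := LinearMap.congr_fun this b
  exact h3.symm

end Hopf

section Coideal
variable {k : Type*} [Field k] {H : Type*} [Ring H] [HopfAlgebra k H]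

lemma exists_fd_comodule (h₀ : H) :
    ∃ (n : ℕ) (γ : (Fin n → k) →ₗ[k] (Fin n → k) ⊗[k] H)
      (ι : (Fin n → k) →ₗ[k] H) (u₀ : Fin n → k),
      IsRightComodule k γ ∧ Function.Injective ι ∧
      (∀ u, LinearMap.rTensor H ι (γ u) = Coalgebra.comul (R := k) (ι u)) ∧
      ι u₀ = h₀ := by
  classical
  set B := Module.Basis.ofVectorSpace k H with hB
  set ρ : (Module.Basis.ofVectorSpaceIndex k H) → (H ⊗[k] H →ₗ[k] H) :=
    fun i => (TensorProduct.rid k H).toLinearMap ∘ₗ LinearMap.lTensor H (B.coord i) with hρ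
  have rho_tmul : ∀ i (x y : H), ρ i (x ⊗ₜ[k] y) = (B.repr y) i • x := by
    intro i x y
    simp [hρ, Module.Basis.coord_apply]
  -- expansion of any tensor along the right-hand basis
  have hexp : ∀ t : H ⊗[k] H, ∃ s : Finset (Module.Basis.ofVectorSpaceIndex k H),
      (∀ i ∉ s, ρ i t = 0) ∧ t = ∑ i ∈ s, (ρ i t) ⊗ₜ[k] (B i : H) := by
    intro t
    induction t with
    | zero => exact ⟨∅, fun i _ => map_zero _, by simp⟩
    | tmul x y =>
        refine ⟨(B.repr y).support, fun i hi => ?_, ?_⟩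
        · rw [rho_tmul]
          rw [Finsupp.notMem_support_iff.mp hi, zero_smul]
        · have hy : ∑ i ∈ (B.repr y).support, (B.repr y) i • (B i : H) = y := by
            have h2 := B.linearCombination_repr y
            rw [Finsupp.linearCombination_apply, Finsupp.sum] at h2
            exact h2
          calc x ⊗ₜ[k] y = x ⊗ₜ[k] (∑ i ∈ (B.repr y).support, (B.repr y) i • (B i : H)) := by
                rw [hy]
            _ = ∑ i ∈ (B.repr y).support, ρ i (x ⊗ₜ[k] y) ⊗ₜ[k] (B i : H) := by
                rw [TensorProduct.tmul_sum]
                exact Finset.sum_congr rfl fun i _ => by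
                  rw [rho_tmul, TensorProduct.tmul_smul, TensorProduct.smul_tmul']
    | add t₁ t₂ ih₁ ih₂ =>
        obtain ⟨s₁, hz₁, he₁⟩ := ih₁
        obtain ⟨s₂, hz₂, he₂⟩ := ih₂
        refine ⟨s₁ ∪ s₂, fun i hi => ?_, ?_⟩
        · rw [map_add, hz₁ i (fun h => hi (Finset.mem_union_left _ h)),
            hz₂ i (fun h => hi (Finset.mem_union_right _ h)), add_zero]
        · have e₁ : ∑ i ∈ s₁ ∪ s₂, (ρ i t₁) ⊗ₜ[k] (B i : H) = t₁ := by
            rw [← Finset.sum_subset (Finset.subset_union_left (s₂ := s₂))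
              (fun i _ hi => by rw [hz₁ i hi, TensorProduct.zero_tmul])]
            exact he₁.symm
          have e₂ : ∑ i ∈ s₁ ∪ s₂, (ρ i t₂) ⊗ₜ[k] (B i : H) = t₂ := by
            rw [← Finset.sum_subset (Finset.subset_union_right (s₁ := s₁))
              (fun i _ hi => by rw [hz₂ i hi, TensorProduct.zero_tmul])]
            exact he₂.symm
          calc t₁ + t₂ = ∑ i ∈ s₁ ∪ s₂, ((ρ i t₁) ⊗ₜ[k] (B i : H) + (ρ i t₂) ⊗ₜ[k] (B i : H)) := by
                rw [Finset.sum_add_distrib, e₁, e₂]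
            _ = ∑ i ∈ s₁ ∪ s₂, (ρ i (t₁ + t₂)) ⊗ₜ[k] (B i : H) := by
                exact Finset.sum_congr rfl fun i _ => by
                  rw [map_add, TensorProduct.add_tmul]
  obtain ⟨s, hs0, hs⟩ := hexp (Coalgebra.comul (R := k) h₀)
  set a : (Module.Basis.ofVectorSpaceIndex k H) → H := fun i => ρ i (Coalgebra.comul (R := k) h₀) with ha
  -- comultiplication formula for the a i
  have sub1 : ∀ (j : Module.Basis.ofVectorSpaceIndex k H) (b : H) (t : H ⊗[k] H),
      LinearMap.lTensor H (ρ j) ((TensorProduct.assoc k H H H) (t ⊗ₜ[k] b))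
        = (B.repr b) j • t := by
    intro j b t
    induction t with
    | zero => rw [TensorProduct.zero_tmul, LinearEquiv.map_zero, map_zero, smul_zero]
    | tmul x y =>
        rw [TensorProduct.assoc_tmul, LinearMap.lTensor_tmul, rho_tmul,
          TensorProduct.tmul_smul]
    | add t₁ t₂ ih₁ ih₂ =>
        rw [TensorProduct.add_tmul, map_add, map_add, ih₁, ih₂, smul_add]
  have sub2 : ∀ (j : Module.Basis.ofVectorSpaceIndex k H) (z : H ⊗[k] H),
      LinearMap.lTensor H (ρ j) ((TensorProduct.assoc k H H H)
        (LinearMap.rTensor H (Coalgebra.comul (R := k)) z))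
        = Coalgebra.comul (R := k) (ρ j z) := by
    intro j z
    induction z with
    | zero => rw [map_zero, LinearEquiv.map_zero, map_zero, map_zero, map_zero]
    | tmul x b =>
        rw [LinearMap.rTensor_tmul, sub1, rho_tmul, map_smul]
    | add z₁ z₂ ih₁ ih₂ => simp only [map_add, ih₁, ih₂]
  have comul_a : ∀ j, Coalgebra.comul (R := k) (a j)
      = ∑ i ∈ s, (a i) ⊗ₜ[k] (ρ j (Coalgebra.comul (R := k) (B i : H))) := by
    intro j
    have step := sub2 j (Coalgebra.comul (R := k) h₀)
    rw [Coalgebra.coassoc_apply h₀] at step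
    rw [ha]
    rw [← step]
    conv_lhs => rw [hs]
    rw [map_sum, map_sum]
    exact Finset.sum_congr rfl fun i _ => by
      rw [LinearMap.lTensor_tmul, LinearMap.lTensor_tmul]
  -- the finite-dimensional right coideal W
  set W : Submodule k H := Submodule.span k (↑(s.image a) : Set H) with hW
  have haW : ∀ i ∈ s, a i ∈ W := fun i hi =>
    Submodule.subset_span (by simp only [Finset.coe_image, Set.mem_image]; exact ⟨i, hi, rfl⟩)
  have hFD : FiniteDimensional k W := inferInstance
  have hh₀W : h₀ ∈ W := by
    have happ := congrArg ((TensorProduct.rid k H).toLinearMap ∘ₗ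
      LinearMap.lTensor H (Coalgebra.counit (R := k))) hs
    simp only [LinearMap.comp_apply, Coalgebra.lTensor_counit_comul, map_sum,
      LinearMap.lTensor_tmul, LinearEquiv.coe_coe] at happ
    rw [TensorProduct.rid_tmul, one_smul] at happ
    have : h₀ = ∑ i ∈ s, Coalgebra.counit (R := k) (B i : H) • a i := by
      rw [happ]
      exact Finset.sum_congr rfl fun i _ => by rw [TensorProduct.rid_tmul]
    rw [this]
    exact Submodule.sum_mem _ fun i hi => Submodule.smul_mem _ _ (haW i hi)
  -- the embedding of U := Fin n → k
  set n := Module.finrank k W with hn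
  set bW : Module.Basis (Fin n) k W := Module.finBasis k W with hbW
  set ι : (Fin n → k) →ₗ[k] H := W.subtype ∘ₗ (bW.equivFun.symm : (Fin n → k) ≃ₗ[k] W).toLinearMap
    with hι
  have hιinj : Function.Injective ι := by
    rw [hι]
    exact Subtype.coe_injective.comp bW.equivFun.symm.injective
  have hιrange : LinearMap.range ι = W := by
    rw [hι, LinearMap.range_comp, LinearEquiv.range, Submodule.map_top, Submodule.range_subtype]
  have hΔW : ∀ w ∈ W, Coalgebra.comul (R := k) w ∈ LinearMap.range (LinearMap.rTensor H ι) := by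
    intro w hw
    induction hw using Submodule.span_induction with
    | mem x hx =>
        simp only [Finset.coe_image, Set.mem_image] at hx
        obtain ⟨j, hj, rfl⟩ := hx
        rw [comul_a j]
        apply Submodule.sum_mem
        intro i hi
        have : a i ∈ LinearMap.range ι := hιrange ▸ haW i hi
        obtain ⟨u, hu⟩ := this
        exact ⟨u ⊗ₜ[k] _, by rw [LinearMap.rTensor_tmul, hu]⟩
    | zero => rw [map_zero]; exact Submodule.zero_mem _
    | add x y _ _ ihx ihy => rw [map_add]; exact Submodule.add_mem _ ihx ihy
    | smul c x _ ihx => rw [map_smul]; exact Submodule.smul_mem _ _ ihx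
  obtain ⟨π, hπ⟩ := ι.exists_leftInverse_of_injective (LinearMap.ker_eq_bot.mpr hιinj)
  set γ : (Fin n → k) →ₗ[k] (Fin n → k) ⊗[k] H :=
    LinearMap.rTensor H π ∘ₗ Coalgebra.comul ∘ₗ ι with hγdef
  have hγe : ∀ u, LinearMap.rTensor H ι (γ u) = Coalgebra.comul (R := k) (ι u) := by
    intro u
    obtain ⟨z, hz⟩ := hΔW (ι u) (hιrange ▸ LinearMap.mem_range_self ι u)
    have hγu : γ u = z := by
      rw [hγdef]
      simp only [LinearMap.comp_apply]
      rw [← hz, ← LinearMap.comp_apply, ← LinearMap.rTensor_comp, hπ, LinearMap.rTensor_id,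
        LinearMap.id_apply]
    rw [hγu, hz]
  have hγ : LinearMap.rTensor H ι ∘ₗ γ = Coalgebra.comul ∘ₗ ι := LinearMap.ext hγe
  -- u₀
  obtain ⟨u₀, hu₀⟩ : h₀ ∈ LinearMap.range ι := hιrange ▸ hh₀W
  refine ⟨n, γ, ι, u₀, ⟨?_, ?_⟩, hιinj, hγe, hu₀⟩
  · -- coassociativity
    have hinj2 : Function.Injective (LinearMap.rTensor (H ⊗[k] H) ι) :=
      Module.Flat.rTensor_preserves_injective_linearMap ι hιinj
    apply LinearMap.ext
    intro u
    apply hinj2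
    have nat1 : (LinearMap.rTensor (H ⊗[k] H) ι) ∘ₗ (TensorProduct.assoc k (Fin n → k) H H).toLinearMap
        = (TensorProduct.assoc k H H H).toLinearMap ∘ₗ
          (LinearMap.rTensor H (LinearMap.rTensor H ι)) := by
      apply TensorProduct.ext_threefold
      intro x y z
      simp
    have step1 : (LinearMap.rTensor (H ⊗[k] H) ι)
        (((TensorProduct.assoc k (Fin n → k) H H).toLinearMap ∘ₗ
          (TensorProduct.map γ LinearMap.id) ∘ₗ γ) u)
        = (TensorProduct.assoc k H H H).toLinearMap
            ((LinearMap.rTensor H (Coalgebra.comul (R := k)))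
              ((LinearMap.rTensor H ι) (γ u))) := by
      simp only [LinearMap.comp_apply]
      rw [← LinearMap.comp_apply (LinearMap.rTensor (H ⊗[k] H) ι), nat1]
      simp only [LinearMap.comp_apply]
      congr 1
      rw [show (TensorProduct.map γ LinearMap.id) = LinearMap.rTensor H γ from rfl]
      rw [← LinearMap.comp_apply, ← LinearMap.rTensor_comp, hγ, LinearMap.rTensor_comp]
      rfl
    have step2 : (LinearMap.rTensor (H ⊗[k] H) ι)
        (((TensorProduct.map LinearMap.id (Coalgebra.comul (R := k))) ∘ₗ γ) u)
        = (LinearMap.lTensor H (Coalgebra.comul (R := k)))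
            ((LinearMap.rTensor H ι) (γ u)) := by
      simp only [LinearMap.comp_apply]
      rw [show (TensorProduct.map (LinearMap.id : (Fin n → k) →ₗ[k] _) (Coalgebra.comul (R := k)))
          = LinearMap.lTensor (Fin n → k) (Coalgebra.comul (R := k)) from rfl]
      rw [← LinearMap.comp_apply, LinearMap.rTensor_comp_lTensor, ← LinearMap.lTensor_comp_rTensor,
        LinearMap.comp_apply]
    rw [step1, step2, hγe u]
    exact Coalgebra.coassoc_apply (ι u)
  · -- counit
    apply LinearMap.ext
    intro u
    apply hιinj
    have nat2 : ∀ z : (Fin n → k) ⊗[k] k,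
        ι ((TensorProduct.rid k (Fin n → k)) z)
          = (TensorProduct.rid k H) ((LinearMap.rTensor k ι) z) := by
      intro z
      induction z with
      | zero => rw [LinearEquiv.map_zero, map_zero, map_zero, LinearEquiv.map_zero]
      | tmul x c => rw [TensorProduct.rid_tmul, LinearMap.rTensor_tmul, TensorProduct.rid_tmul,
          map_smul]
      | add z₁ z₂ ih₁ ih₂ => rw [LinearEquiv.map_add, map_add, map_add, LinearEquiv.map_add,
          ih₁, ih₂]
    simp only [LinearMap.comp_apply, LinearMap.id_apply, LinearEquiv.coe_coe]
    rw [nat2]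
    rw [show (TensorProduct.map (LinearMap.id : (Fin n → k) →ₗ[k] _) (Coalgebra.counit (R := k)))
        = LinearMap.lTensor (Fin n → k) (Coalgebra.counit (R := k)) from rfl]
    rw [← LinearMap.comp_apply (LinearMap.rTensor k ι), LinearMap.rTensor_comp_lTensor,
      ← LinearMap.lTensor_comp_rTensor, LinearMap.comp_apply, hγe u,
      Coalgebra.lTensor_counit_comul, TensorProduct.rid_tmul, one_smul]
end Coideal

section MainAux
variable {k : Type*} [Field k] {H : Type*} [Ring H] [HopfAlgebra k H]
  {B : Type*} [Ring B] [Algebra k B]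

/-- Expansion of the action of an antipode on a product. -/
lemma act_S_mul (act : H →ₗ[k] B →ₗ[k] B) (hact : IsModuleAlgebra k act)
    {h : H} (r : Coalgebra.Repr k h (H × H)) (x y : B) :
    act (HopfAlgebra.antipode (R := k) h) (x * y)
      = ∑ i ∈ r.index, act (HopfAlgebra.antipode (R := k) (r.right i)) x
          * act (HopfAlgebra.antipode (R := k) (r.left i)) y := by
  rw [hact.2.2.1 (HopfAlgebra.antipode (R := k) h) x y, comul_antipode_repr r]
  rw [map_sum, map_sum]
  exact Finset.sum_congr rfl fun i _ => by
    rw [TensorProduct.map_tmul, LinearMap.mul'_apply, LinearMap.flip_apply,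
      LinearMap.flip_apply]

end MainAux


set_option maxHeartbeats 3000000

/-- If `B` is an `S(H)`-simple `H`-module algebra, `K` a simple right
ideal of `B` and `V` a nonzero right `B`-module, then `K` embeds as a right `B`-module
into `U ⊗ V` (with the twisted action) for some finite-dimensional right `H`-comodule
`U`. -/
theorem simple_right_ideal_embeds_twisted (k : Type*) [Field k] {H B V : Type*}
    [Ring H] [HopfAlgebra k H] [Ring B] [Algebra k B] [AddCommGroup V] [Module k V]
    (act : H →ₗ[k] B →ₗ[k] B) (hact : IsModuleAlgebra k act)
    (hsimple : IsSHSimple k act)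
    (ψ : B →ₗ[k] V →ₗ[k] V) (hψ : IsRightAction k ψ) (hV : ∃ v : V, v ≠ 0)
    (K : Set B) (hK : IsRightIdeal K) (hKsmul : ∀ (c : k), ∀ x ∈ K, c • x ∈ K)
    (hKne : ∃ x ∈ K, x ≠ 0)
    (hKsimple : ∀ K' : Set B, K' ⊆ K → IsRightIdeal K' → K' = {0} ∨ K' = K) :
    ∃ (n : ℕ) (γ : (Fin n → k) →ₗ[k] (Fin n → k) ⊗[k] H),
      IsRightComodule k γ ∧
      ∃ f : B →ₗ[k] (Fin n → k) ⊗[k] V,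
        Set.InjOn f K ∧ ∀ x ∈ K, ∀ a : B, f (x * a) = twistAct k act γ ψ a (f x) := by
  classical
  obtain ⟨x₀, hx₀K, hx₀⟩ := hKne
  -- the set of elements killed by `V ∘ S(H)` is an `S(H)`-stable two-sided ideal
  set T : Set B := {b : B | ∀ (g : H) (v : V),
    ψ (act (HopfAlgebra.antipode (R := k) g) b) v = 0} with hT
  have hTideal : IsTwoSidedIdealSet T := by
    refine ⟨?_, ?_, ?_, ?_⟩
    · intro g v; simp
    · intro x hx y hy g v
      rw [map_add, map_add, LinearMap.add_apply, hx g v, hy g v, add_zero]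
    · intro x hx g v
      rw [map_neg, map_neg, LinearMap.neg_apply, hx g v, neg_zero]
    · intro x hx aa
      constructor
      · intro g v
        let r := Coalgebra.Repr.arbitrary k g
        rw [act_S_mul act hact r x aa, map_sum, LinearMap.sum_apply]
        apply Finset.sum_eq_zero
        intro i _
        rw [hψ.2, LinearMap.comp_apply, hx (r.right i) v, map_zero]
      · intro g v
        let r := Coalgebra.Repr.arbitrary k g
        rw [act_S_mul act hact r aa x, map_sum, LinearMap.sum_apply]
        apply Finset.sum_eq_zero
        intro i _
        rw [hψ.2, LinearMap.comp_apply, hx (r.left i) _]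
  have hstab : ∀ h : H, (∃ g : H, HopfAlgebra.antipode (R := k) g = h) →
      ∀ t ∈ T, act h t ∈ T := by
    rintro h ⟨g, rfl⟩ t ht g' v
    have h1 : act (HopfAlgebra.antipode (R := k) g')
        (act (HopfAlgebra.antipode (R := k) g) t)
        = act (HopfAlgebra.antipode (R := k) (g * g')) t := by
      rw [antipode_mul' g g', hact.1, LinearMap.comp_apply]
    rw [h1]
    exact ht (g * g') v
  obtain hT0 | hTuniv := hsimple.2 T hTideal hstab
  swap
  · exfalso
    obtain ⟨v, hv⟩ := hV
    have h1 : (1 : B) ∈ T := by rw [hTuniv]; trivial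
    have h2 := h1 1 v
    rw [antipode_one', hact.2.1, LinearMap.id_apply, hψ.1, LinearMap.id_apply] at h2
    exact hv h2
  -- extract h₀, v₀ detecting x₀
  have hx₀T : x₀ ∉ T := by
    intro hmem
    rw [hT0] at hmem
    exact hx₀ hmem
  rw [hT] at hx₀T
  simp only [Set.mem_setOf_eq, not_forall] at hx₀T
  obtain ⟨h₀, v₀, hnz⟩ := hx₀T
  -- the finite-dimensional comodule
  obtain ⟨n, γ, ι, u₀, hcom, hιinj, hγe, hu₀⟩ := exists_fd_comodule (k := k) h₀
  -- the embedding map f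
  set inner : B →ₗ[k] (H →ₗ[k] V) :=
    ((LinearMap.llcomp k B B V (ψ.flip v₀)) ∘ₗ (act ∘ₗ HopfAlgebra.antipode (R := k))).flip
    with hinner
  have hinner_apply : ∀ (b : B) (h : H),
      inner b h = ψ (act (HopfAlgebra.antipode (R := k) h) b) v₀ := fun b h => rfl
  set ω : (Fin n → k) ⊗[k] H := γ u₀ with hω
  set f : B →ₗ[k] (Fin n → k) ⊗[k] V :=
    { toFun := fun b => LinearMap.lTensor (Fin n → k) (inner b) ω
      map_add' := by
        intro x y
        show LinearMap.lTensor (Fin n → k) (inner (x + y)) ω = _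
        rw [map_add, LinearMap.lTensor_add, LinearMap.add_apply]
      map_smul' := by
        intro c x
        show LinearMap.lTensor (Fin n → k) (inner (c • x)) ω = _
        rw [map_smul, LinearMap.lTensor_smul, LinearMap.smul_apply, RingHom.id_apply] } with hf
  have hf_apply : ∀ b : B, f b = LinearMap.lTensor (Fin n → k) (inner b) ω := fun b => rfl
  -- the core computation
  have hcore : ∀ (x aa : B), inner (x * aa)
      = TensorProduct.lift (ψ ∘ₗ act.flip aa ∘ₗ HopfAlgebra.antipode (R := k))
          ∘ₗ LinearMap.lTensor H (inner x) ∘ₗ Coalgebra.comul := by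
    intro x aa
    apply LinearMap.ext; intro h
    let r := Coalgebra.Repr.arbitrary k h
    rw [LinearMap.comp_apply, LinearMap.comp_apply, hinner_apply,
      act_S_mul act hact r x aa]
    calc ψ (∑ i ∈ r.index, act (HopfAlgebra.antipode (R := k) (r.right i)) x
            * act (HopfAlgebra.antipode (R := k) (r.left i)) aa) v₀
        = ∑ i ∈ r.index, ψ (act (HopfAlgebra.antipode (R := k) (r.left i)) aa)
            (ψ (act (HopfAlgebra.antipode (R := k) (r.right i)) x) v₀) := by
          rw [map_sum, LinearMap.sum_apply]
          exact Finset.sum_congr rfl fun i _ => by rw [hψ.2, LinearMap.comp_apply]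
      _ = TensorProduct.lift (ψ ∘ₗ act.flip aa ∘ₗ HopfAlgebra.antipode (R := k))
            ((LinearMap.lTensor H (inner x)) (Coalgebra.comul (R := k) h)) := by
          rw [← r.eq, map_sum, map_sum]
          exact Finset.sum_congr rfl fun i _ => by
            rw [LinearMap.lTensor_tmul, TensorProduct.lift.tmul, LinearMap.comp_apply,
              LinearMap.comp_apply, LinearMap.flip_apply, hinner_apply]
  -- equivariance
  have hequiv : ∀ (x aa : B), f (x * aa) = twistAct k act γ ψ aa (f x) := by
    intro x aa
    rw [twistAct, LinearMap.comp_apply, LinearMap.comp_apply]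
    have st1 : (TensorProduct.map γ LinearMap.id) (f x)
        = LinearMap.lTensor ((Fin n → k) ⊗[k] H) (inner x) ((LinearMap.rTensor H γ) ω) := by
      rw [hf_apply,
        show (TensorProduct.map γ (LinearMap.id : V →ₗ[k] V)) = LinearMap.rTensor V γ from rfl,
        ← LinearMap.comp_apply, LinearMap.rTensor_comp_lTensor,
        ← LinearMap.lTensor_comp_rTensor, LinearMap.comp_apply]
    rw [st1]
    have st2 : (TensorProduct.assoc k (Fin n → k) H V).toLinearMap ∘ₗ
        LinearMap.lTensor ((Fin n → k) ⊗[k] H) (inner x)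
        = LinearMap.lTensor (Fin n → k) (LinearMap.lTensor H (inner x)) ∘ₗ
          (TensorProduct.assoc k (Fin n → k) H H).toLinearMap := by
      apply TensorProduct.ext_threefold
      intro p q rr
      simp
    rw [← LinearMap.comp_apply ((TensorProduct.assoc k (Fin n → k) H V).toLinearMap), st2]
    have st3 : (TensorProduct.assoc k (Fin n → k) H H).toLinearMap ((LinearMap.rTensor H γ) ω)
        = LinearMap.lTensor (Fin n → k) (Coalgebra.comul (R := k)) ω := by
      have hco := LinearMap.congr_fun hcom.1 u₀
      simp only [LinearMap.comp_apply] at hco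
      rw [show (TensorProduct.map γ (LinearMap.id : H →ₗ[k] H)) = LinearMap.rTensor H γ
          from rfl] at hco
      rw [show (TensorProduct.map (LinearMap.id : (Fin n → k) →ₗ[k] (Fin n → k))
          (Coalgebra.comul (R := k) (A := H)))
          = LinearMap.lTensor (Fin n → k) (Coalgebra.comul (R := k)) from rfl] at hco
      exact hco
    rw [LinearMap.comp_apply, st3]
    rw [show (TensorProduct.map (LinearMap.id : (Fin n → k) →ₗ[k] (Fin n → k))
        (TensorProduct.lift (ψ ∘ₗ act.flip aa ∘ₗ HopfAlgebra.antipode (R := k))))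
        = LinearMap.lTensor (Fin n → k)
            (TensorProduct.lift (ψ ∘ₗ act.flip aa ∘ₗ HopfAlgebra.antipode (R := k))) from rfl]
    rw [← LinearMap.comp_apply (LinearMap.lTensor (Fin n → k) _), ← LinearMap.lTensor_comp,
      ← LinearMap.comp_apply (LinearMap.lTensor (Fin n → k) _), ← LinearMap.lTensor_comp,
      hf_apply, hcore x aa, LinearMap.comp_assoc]
  -- the detection functional
  set ζ : (Fin n → k) ⊗[k] V →ₗ[k] V :=
    (TensorProduct.lid k V).toLinearMap ∘ₗ
      LinearMap.rTensor V (Coalgebra.counit ∘ₗ ι) with hζ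
  have hζf : ∀ b : B, ζ (f b) = ψ (act (HopfAlgebra.antipode (R := k) h₀) b) v₀ := by
    intro b
    rw [hζ, hf_apply, LinearMap.comp_apply,
      ← LinearMap.comp_apply (LinearMap.rTensor V (Coalgebra.counit ∘ₗ ι)),
      LinearMap.rTensor_comp_lTensor, ← LinearMap.lTensor_comp_rTensor, LinearMap.comp_apply,
      LinearMap.rTensor_comp, LinearMap.comp_apply, hγe u₀, hu₀,
      Coalgebra.rTensor_counit_comul, LinearMap.lTensor_tmul, LinearEquiv.coe_coe,
      TensorProduct.lid_tmul, one_smul, hinner_apply]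
  have hfx₀ : f x₀ ≠ 0 := by
    intro h0
    apply hnz
    rw [← hζf x₀, h0, map_zero]
  -- conclusion
  refine ⟨n, γ, hcom, f, ?_, fun x _ aa => hequiv x aa⟩
  set K' : Set B := {x | x ∈ K ∧ f x = 0} with hK'
  have hK'ideal : IsRightIdeal K' :=
    ⟨⟨hK.1, map_zero f⟩,
      fun x hx y hy => ⟨hK.2.1 x hx.1 y hy.1, by rw [map_add, hx.2, hy.2, add_zero]⟩,
      fun x hx aa => ⟨hK.2.2 x hx.1 aa, by rw [hequiv x aa, hx.2, map_zero]⟩⟩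
  have hsub : K' ⊆ K := fun x hx => hx.1
  obtain h0' | hKK := hKsimple K' hsub hK'ideal
  · intro x hx y hy hxy
    have hz : x + (-1 : k) • y ∈ K := hK.2.1 x hx _ (hKsmul (-1) y hy)
    have hfz : f (x + (-1 : k) • y) = 0 := by
      calc f (x + (-1 : k) • y) = f x + (-1 : k) • f y := by rw [map_add, map_smul]
        _ = f y + -(f y) := by rw [hxy, neg_one_smul k (f y)]
        _ = 0 := add_neg_cancel (f y)
    have hmem : x + (-1 : k) • y ∈ K' := ⟨hz, hfz⟩
    rw [h0'] at hmem
    have hzero : x + (-1 : k) • y = 0 := hmem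
    rw [neg_one_smul, ← sub_eq_add_neg] at hzero
    exact sub_eq_zero.mp hzero
  · exfalso
    have hmem : x₀ ∈ K' := hKK ▸ hx₀K
    exact hfx₀ hmem.2
end

section
/- Let R be a semiprime right Goldie subring of a semisimple Artinian ring S, and let G be a set of right ideals of R such that (a) every I ∈ G has zero left annihilator in S, and (b) for each x ∈ S there exists I ∈ G with xI ⊆ R. Then S is a classical right quotient ring of R, and every right ideal in G contains a regular element of R. -/
/-- A subset is nilpotent: all products of `n` of its elements vanish, for some `n > 0`. -/
def IsNilpotentSet {A : Type*} [Ring A] (T : Set A) : Prop :=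
  ∃ n : ℕ, 0 < n ∧ ∀ f : Fin n → A, (∀ i, f i ∈ T) → (List.ofFn f).prod = 0

/-- A ring is semiprime: it has no nonzero nilpotent two-sided ideals. -/
def IsSemiprimeRing (A : Type*) [Ring A] : Prop :=
  ∀ T : Set A, IsTwoSidedIdealSet T → IsNilpotentSet T → T = {0}

/-- ACC on right annihilators. -/
def ACCRightAnnihilators (A : Type*) [Ring A] : Prop :=
  ∀ f : ℕ → Set A,
    (∀ n, ∃ X : Set A, f n = {a : A | ∀ x ∈ X, x * a = 0}) →
    (∀ n, f n ⊆ f (n + 1)) → ∃ N, ∀ n, N ≤ n → f n = f N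

/-- Finite right uniform dimension: no infinite independent family of nonzero
right ideals. -/
def FiniteRightUniformDim (A : Type*) [Ring A] : Prop :=
  ¬ ∃ f : ℕ → Set A,
      (∀ n, IsRightIdeal (f n)) ∧
      (∀ n, ∃ x ∈ f n, x ≠ 0) ∧
      (∀ (s : Finset ℕ) (g : ℕ → A), (∀ i ∈ s, g i ∈ f i) →
        (∑ i ∈ s, g i) = 0 → ∀ i ∈ s, g i = 0)

/-- A regular element of a ring: neither a left nor a right zero divisor. -/
def IsRegularElem {A : Type*} [Ring A] (u : A) : Prop :=
  ∀ x : A, (u * x = 0 → x = 0) ∧ (x * u = 0 → x = 0)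


namespace Goldie15

variable {A : Type*} [Ring A]

/-- right annihilator of an element, as a set -/
def Ann (b : A) : Set A := {t | b * t = 0}

lemma mem_Ann {b t : A} : t ∈ Ann b ↔ b * t = 0 := Iff.rfl

lemma Ann_is_ann (b : A) : Ann b = {a : A | ∀ x ∈ ({b} : Set A), x * a = 0} := by
  ext t; simp [Ann]

theorem semiprime_elem (hsp : IsSemiprimeRing A) {a : A} (h : ∀ r : A, a * r * a = 0) :
    a = 0 := by
  set T : Set A := ↑(AddSubgroup.closure {x : A | ∃ r s : A, x = r * a * s}) with hT
  have hmulmem : ∀ c : A, ∀ x ∈ T, x * c ∈ T ∧ c * x ∈ T := by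
    intro c x hx
    constructor
    · refine AddSubgroup.closure_induction ?_ ?_ ?_ ?_ hx
      · rintro y ⟨r, s, rfl⟩
        exact AddSubgroup.subset_closure ⟨r, s * c, by noncomm_ring⟩
      · rw [zero_mul, hT]; exact (AddSubgroup.closure _).zero_mem
      · intro y z _ _ hy hz
        rw [add_mul]; exact (AddSubgroup.closure _).add_mem hy hz
      · intro y _ hy
        rw [neg_mul]
        exact (AddSubgroup.closure _).neg_mem hy
    · refine AddSubgroup.closure_induction ?_ ?_ ?_ ?_ hx
      · rintro y ⟨r, s, rfl⟩
        exact AddSubgroup.subset_closure ⟨c * r, s, by noncomm_ring⟩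
      · rw [mul_zero, hT]; exact (AddSubgroup.closure _).zero_mem
      · intro y z _ _ hy hz
        rw [mul_add]; exact (AddSubgroup.closure _).add_mem hy hz
      · intro y _ hy
        rw [mul_neg]
        exact (AddSubgroup.closure _).neg_mem hy
  have hTI : IsTwoSidedIdealSet T :=
    ⟨(AddSubgroup.closure _).zero_mem,
     fun x hx y hy => (AddSubgroup.closure _).add_mem hx hy,
     fun x hx => (AddSubgroup.closure _).neg_mem hx,
     fun x hx c => hmulmem c x hx⟩
  have hbase : ∀ x ∈ T, ∀ y ∈ T, x * y = 0 := by
    intro x hx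
    refine AddSubgroup.closure_induction ?_ ?_ ?_ ?_ hx
    · rintro x' ⟨r, s, rfl⟩ y hy
      refine AddSubgroup.closure_induction ?_ ?_ ?_ ?_ hy
      · rintro y' ⟨r', s', rfl⟩
        have : a * (s * r') * a = 0 := h _
        calc r * a * s * (r' * a * s') = r * (a * (s * r') * a) * s' := by noncomm_ring
          _ = 0 := by rw [this]; noncomm_ring
      · simp
      · intro y z _ _ hy' hz'; rw [mul_add, hy', hz', add_zero]
      · intro y _ hy'; rw [mul_neg, hy', neg_zero]
    · intro y _; simp
    · intro y z _ _ hy' hz' w hw; rw [add_mul, hy' w hw, hz' w hw, add_zero]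
    · intro y _ hy' w hw; rw [neg_mul, hy' w hw, neg_zero]
  have hnil : IsNilpotentSet T := by
    refine ⟨2, by norm_num, ?_⟩
    intro f hf
    have : (List.ofFn f).prod = f 0 * f 1 := by
      simp [List.ofFn_succ]
    rw [this]
    exact hbase _ (hf 0) _ (hf 1)
  have := hsp T hTI hnil
  have ha : a ∈ T := AddSubgroup.subset_closure ⟨1, 1, by noncomm_ring⟩
  rw [this] at ha
  simpa using ha

theorem rightIdeal_sq_zero (hsp : IsSemiprimeRing A) {K : Set A} (hK : IsRightIdeal K)
    (h : ∀ x ∈ K, ∀ y ∈ K, x * y = 0) : ∀ x ∈ K, x = 0 := by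
  intro x hx
  refine semiprime_elem hsp fun r => ?_
  exact h _ (hK.2.2 x hx r) _ hx

lemma nilpotent_swap {a b : A} (h : IsNilpotent (a * b)) : IsNilpotent (b * a) := by
  obtain ⟨n, hn⟩ := h
  refine ⟨n + 1, ?_⟩
  have key : ∀ m : ℕ, (b * a) ^ (m + 1) = b * (a * b) ^ m * a := by
    intro m
    induction m with
    | zero => simp
    | succ m ih =>
      rw [pow_succ, ih, pow_succ]
      noncomm_ring
  rw [key, hn]
  simp

theorem acc_max (hacc : ACCRightAnnihilators A) {B : Set A} (hB : B.Nonempty) :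
    ∃ b ∈ B, ∀ b' ∈ B, Ann b ⊆ Ann b' → Ann b' = Ann b := by
  by_contra h
  push_neg at h
  -- from every b ∈ B we can find b' ∈ B with strictly bigger annihilator
  have step : ∀ b : A, b ∈ B → ∃ b' : A, b' ∈ B ∧ Ann b ⊆ Ann b' ∧ Ann b' ≠ Ann b := by
    intro b hb
    obtain ⟨b', hb', hsub, hne⟩ := h b hb
    exact ⟨b', hb', hsub, hne⟩
  classical
  obtain ⟨b₀, hb₀⟩ := hB
  choose F hF1 hF2 hF3 using step
  -- build the sequence
  let g : ℕ → {b : A // b ∈ B} := fun n => Nat.rec ⟨b₀, hb₀⟩ (fun _ p => ⟨F p.1 p.2, hF1 p.1 p.2⟩) n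
  have hg : ∀ n, (g (n + 1)).1 = F (g n).1 (g n).2 := fun n => rfl
  have hmono : ∀ n, Ann (g n).1 ⊆ Ann (g (n+1)).1 := by
    intro n; rw [hg]; exact hF2 _ _
  have hne : ∀ n, Ann (g (n+1)).1 ≠ Ann (g n).1 := by
    intro n; rw [hg]; exact hF3 _ _
  obtain ⟨N, hN⟩ := hacc (fun n => Ann (g n).1)
    (fun n => ⟨{(g n).1}, Ann_is_ann _⟩) hmono
  exact hne N (by rw [hN (N+1) (by omega)])

theorem no_nil (hsp : IsSemiprimeRing A) (hacc : ACCRightAnnihilators A) {a : A}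
    (h : ∀ r : A, IsNilpotent (r * a)) : a = 0 := by
  by_cases htriv : (1 : A) = 0
  · calc a = a * 1 := by rw [mul_one]
      _ = 0 := by rw [htriv, mul_zero]
  by_contra ha
  set B : Set A := {b | (∃ r : A, b = r * a) ∧ b ≠ 0} with hB
  have hBne : B.Nonempty := ⟨a, ⟨1, (one_mul a).symm⟩, ha⟩
  obtain ⟨b, ⟨⟨r₀, hr₀⟩, hb0⟩, hmax⟩ := acc_max hacc hBne
  -- every nonzero multiple r*b has the same annihilator
  have hsame : ∀ r : A, r * b ≠ 0 → Ann (r * b) = Ann b := by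
    intro r hrb
    refine hmax _ ⟨⟨r * r₀, by rw [hr₀, mul_assoc]⟩, hrb⟩ ?_
    intro t ht
    rw [mem_Ann] at ht ⊢
    rw [mul_assoc, ht, mul_zero]
  have hbrb : ∀ r : A, b * r * b = 0 := by
    intro r
    set x := r * b with hx
    have hxnil : IsNilpotent x := by
      rw [hx, hr₀, ← mul_assoc]; exact h _
    by_cases hx0 : x = 0
    · rw [mul_assoc, ← hx, hx0, mul_zero]
    · -- powers of x
      have hpowB : ∀ j : ℕ, x ^ (j + 1) ≠ 0 → Ann (x ^ (j + 1)) = Ann b := by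
        intro j hj
        have : x ^ (j + 1) = (x ^ j * r) * b := by
          rw [pow_succ, hx, mul_assoc]
        rw [this]
        exact hsame _ (this ▸ hj)
      have hex : ∃ k, x ^ k = 0 := by
        obtain ⟨m, hm⟩ := hxnil; exact ⟨m, hm⟩
      classical
      let k := Nat.find hex
      have hk : x ^ k = 0 := Nat.find_spec hex
      have hk2 : 2 ≤ k := by
        rcases Nat.lt_or_ge k 2 with h' | h'
        · interval_cases k
          · simp at hk; exact absurd hk htriv
          · simp at hk; exact absurd hk hx0
        · exact h'
      have hkm1 : x ^ (k - 1) ≠ 0 := Nat.find_min hex (by omega)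
      have : Ann (x ^ (k - 1)) = Ann b := by
        have h1 : k - 1 = (k - 2) + 1 := by omega
        rw [h1]; exact hpowB _ (h1 ▸ hkm1)
      have hxAnn : x ∈ Ann (x ^ (k - 1)) := by
        rw [mem_Ann, ← pow_succ]
        have : k - 1 + 1 = k := by omega
        rw [this, hk]
      rw [this, mem_Ann] at hxAnn
      rw [mul_assoc, ← hx, hxAnn]
  exact hb0 (semiprime_elem hsp hbrb)

theorem exists_nonnil (hsp : IsSemiprimeRing A) (hacc : ACCRightAnnihilators A)
    {K : Set A} (hK : IsRightIdeal K) {x : A} (hx : x ∈ K) (hx0 : x ≠ 0) :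
    ∃ y ∈ K, ¬ IsNilpotent y := by
  by_contra h
  push_neg at h
  refine hx0 (no_nil hsp hacc fun r => ?_)
  exact nilpotent_swap (h _ (hK.2.2 x hx r))

theorem ann_stab (hacc : ACCRightAnnihilators A) (a : A) :
    ∃ n : ℕ, 0 < n ∧ ∀ t : A, a ^ n * (a ^ n * t) = 0 → a ^ n * t = 0 := by
  obtain ⟨N, hN⟩ := hacc (fun n => Ann (a ^ (n + 1)))
    (fun n => ⟨{a ^ (n + 1)}, Ann_is_ann _⟩)
    (by
      intro n t ht
      rw [mem_Ann] at ht ⊢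
      rw [pow_succ', mul_assoc, ht, mul_zero])
  refine ⟨N + 1, Nat.succ_pos _, fun t ht => ?_⟩
  have h2 : a ^ (2 * N + 1 + 1) * t = 0 := by
    have : a ^ (2 * N + 1 + 1) = a ^ (N + 1) * a ^ (N + 1) := by
      rw [← pow_add]; ring_nf
    rw [this, mul_assoc]; exact ht
  have : t ∈ Ann (a ^ (2 * N + 1 + 1)) := h2
  rw [hN (2 * N + 1) (by omega)] at this
  exact this

end Goldie15

namespace Goldie15

variable {A : Type*} [Ring A]

/-- independence of the xᵢ's -/
theorem sum_indep (x : ℕ → A)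
    (s : Finset ℕ) (g : ℕ → A)
    (hrep : ∀ i ∈ s, ∃ r : A, g i = x i * r)
    (hprod : ∀ i ∈ s, ∀ j ∈ s, i < j → x i * x j = 0)
    (hstab : ∀ i ∈ s, ∀ t : A, x i * (x i * t) = 0 → x i * t = 0)
    (hsum : (∑ i ∈ s, g i) = 0) : ∀ i ∈ s, g i = 0 := by
  classical
  induction s using Finset.induction_on_min with
  | empty => intro i hi; simp at hi
  | insert a s ha ih =>
    have hanotmem : a ∉ s := fun h => lt_irrefl a (ha a h)
    rw [Finset.sum_insert hanotmem] at hsum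
    -- multiply by x a on the left
    have h1 : x a * g a = 0 := by
      have : x a * (g a + ∑ i ∈ s, g i) = 0 := by rw [hsum, mul_zero]
      rw [mul_add, Finset.mul_sum] at this
      have h2 : ∀ i ∈ s, x a * g i = 0 := by
        intro i hi
        obtain ⟨r, hr⟩ := hrep i (Finset.mem_insert_of_mem hi)
        rw [hr, ← mul_assoc,
          hprod a (Finset.mem_insert_self a s) i (Finset.mem_insert_of_mem hi) (ha i hi),
          zero_mul]
      rw [Finset.sum_eq_zero h2, add_zero] at this
      exact this
    have hga : g a = 0 := by
      obtain ⟨r, hr⟩ := hrep a (Finset.mem_insert_self a s)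
      rw [hr] at h1 ⊢
      exact hstab a (Finset.mem_insert_self a s) r h1
    have hrest : ∀ i ∈ s, g i = 0 := by
      refine ih (fun i hi => hrep i (Finset.mem_insert_of_mem hi))
        (fun i hi j hj hij => hprod i (Finset.mem_insert_of_mem hi) j (Finset.mem_insert_of_mem hj) hij)
        (fun i hi => hstab i (Finset.mem_insert_of_mem hi)) ?_
      rw [hga, zero_add] at hsum
      exact hsum
    intro i hi
    rcases Finset.mem_insert.mp hi with rfl | hi
    · exact hga
    · exact hrest i hi

theorem essential_regular (hsp : IsSemiprimeRing A) (hacc : ACCRightAnnihilators A)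
    (hud : FiniteRightUniformDim A) {L : Set A} (hL : IsRightIdeal L)
    (hess : ∀ a : A, a ≠ 0 → ∃ r : A, a * r ∈ L ∧ a * r ≠ 0) :
    ∃ c ∈ L, ∀ t : A, c * t = 0 → t = 0 := by
  classical
  -- Good n x : x 0, ..., x (n-1) is an admissible system
  let Good : ℕ → (ℕ → A) → Prop := fun n x =>
    (∀ i, i < n → x i ∈ L ∧ x i ≠ 0 ∧ (∀ t : A, x i * (x i * t) = 0 → x i * t = 0)) ∧
    (∀ i j, i < j → j < n → x i * x j = 0)
  -- extension of an admissible system with nonzero annihilator-intersection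
  have ext : ∀ (n : ℕ) (x : ℕ → A), Good n x →
      (∃ t : A, t ≠ 0 ∧ ∀ i, i < n → x i * t = 0) →
      ∃ y : A, y ∈ L ∧ y ≠ 0 ∧ (∀ t : A, y * (y * t) = 0 → y * t = 0) ∧
        (∀ i, i < n → x i * y = 0) := by
    intro n x _ ⟨t₀, ht₀, ht₀K⟩
    set K : Set A := {t | ∀ i, i < n → x i * t = 0} with hKdef
    have hKri : IsRightIdeal K := by
      refine ⟨fun i _ => mul_zero _, ?_, ?_⟩
      · intro u hu v hv i hi
        rw [mul_add, hu i hi, hv i hi, add_zero]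
      · intro u hu a i hi
        rw [← mul_assoc, hu i hi, zero_mul]
    obtain ⟨r, hrL, hr0⟩ := hess t₀ ht₀
    have hrK : t₀ * r ∈ K := hKri.2.2 t₀ ht₀K r
    have hKLri : IsRightIdeal (K ∩ L) := by
      refine ⟨⟨hKri.1, hL.1⟩, ?_, ?_⟩
      · intro u hu v hv; exact ⟨hKri.2.1 u hu.1 v hv.1, hL.2.1 u hu.2 v hv.2⟩
      · intro u hu a; exact ⟨hKri.2.2 u hu.1 a, hL.2.2 u hu.2 a⟩
    obtain ⟨y₀, hy₀, hy₀nil⟩ := exists_nonnil hsp hacc hKLri ⟨hrK, hrL⟩ hr0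
    obtain ⟨m, hm, hstab⟩ := ann_stab hacc y₀
    have hymem : y₀ ^ m ∈ K ∩ L := by
      have : y₀ ^ m = y₀ * y₀ ^ (m - 1) := by
        rw [← pow_succ']
        congr 1
        omega
      rw [this]
      exact ⟨hKri.2.2 _ hy₀.1 _, hL.2.2 _ hy₀.2 _⟩
    have hyne : y₀ ^ m ≠ 0 := fun h => hy₀nil ⟨m, h⟩
    exact ⟨y₀ ^ m, hymem.2, hyne, hstab, fun i hi => hymem.1 i hi⟩
  -- main claim : there is an admissible system with zero annihilator-intersection
  have claim : ∃ (n : ℕ) (x : ℕ → A), Good n x ∧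
      ∀ t : A, (∀ i, i < n → x i * t = 0) → t = 0 := by
    by_contra hcl
    push_neg at hcl
    -- extension function always applicable
    have EXT : ∀ (n : ℕ) (x : ℕ → A), ∃ y : A, Good n x →
        (y ∈ L ∧ y ≠ 0 ∧ (∀ t : A, y * (y * t) = 0 → y * t = 0) ∧
          (∀ i, i < n → x i * y = 0)) := by
      intro n x
      by_cases hg : Good n x
      · obtain ⟨t, ht, ht2⟩ := hcl n x hg
        obtain ⟨y, h1, h2, h3, h4⟩ := ext n x hg ⟨t, ht2, fun i hi => ht i hi⟩
        exact ⟨y, fun _ => ⟨h1, h2, h3, h4⟩⟩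
      · exact ⟨0, fun h => absurd h hg⟩
    choose Y hY using EXT
    let g : ℕ → (ℕ → A) := fun n => Nat.rec (fun _ => 0) (fun m p => Function.update p m (Y m p)) n
    have hgsucc : ∀ n, g (n + 1) = Function.update (g n) n (Y n (g n)) := fun n => rfl
    have hcoh : ∀ n i, i < n → g n i = g (i + 1) i := by
      intro n
      induction n with
      | zero => intro i hi; omega
      | succ n ih =>
        intro i hi
        rcases Nat.lt_or_ge i n with h' | h'
        · rw [hgsucc, Function.update_of_ne (by omega)]
          exact ih i h'
        · have : i = n := by omega
          subst this
          rfl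
    have hgood : ∀ n, Good n (g n) := by
      intro n
      induction n with
      | zero => exact ⟨fun i hi => absurd hi (by omega), fun i j _ hj => absurd hj (by omega)⟩
      | succ n ih =>
        have hYn := hY n (g n) ih
        constructor
        · intro i hi
          rcases Nat.lt_or_ge i n with h' | h'
          · rw [hgsucc, Function.update_of_ne (by omega)]
            exact ih.1 i h'
          · have : i = n := by omega
            subst this
            rw [hgsucc, Function.update_self]
            exact ⟨hYn.1, hYn.2.1, hYn.2.2.1⟩
        · intro i j hij hj
          rcases Nat.lt_or_ge j n with h' | h'
          · rw [hgsucc, Function.update_of_ne (by omega), Function.update_of_ne (by omega)]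
            exact ih.2 i j hij h'
          · have : j = n := by omega
            subst this
            rw [hgsucc, Function.update_of_ne (by omega), Function.update_self]
            exact hYn.2.2.2 i hij
    -- the infinite sequence
    set x : ℕ → A := fun n => g (n + 1) n with hxdef
    have hx : ∀ i n, i < n → x i = g n i := by
      intro i n hi
      rw [hxdef]
      exact (hcoh n i hi).symm
    have hxL : ∀ i, x i ∈ L ∧ x i ≠ 0 ∧ (∀ t : A, x i * (x i * t) = 0 → x i * t = 0) := by
      intro i
      exact (hgood (i + 1)).1 i (by omega)
    have hxprod : ∀ i j, i < j → x i * x j = 0 := by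
      intro i j hij
      rw [hx i (j + 1) (by omega), hxdef]
      exact (hgood (j + 1)).2 i j hij (by omega)
    -- contradicts finite uniform dimension
    apply hud
    refine ⟨fun n => {z | ∃ r : A, z = x n * r}, ?_, ?_, ?_⟩
    · intro n
      refine ⟨⟨0, (mul_zero _).symm⟩, ?_, ?_⟩
      · rintro u ⟨r, rfl⟩ v ⟨r', rfl⟩
        exact ⟨r + r', by rw [mul_add]⟩
      · rintro u ⟨r, rfl⟩ a
        exact ⟨r * a, by rw [mul_assoc]⟩
    · intro n
      exact ⟨x n, ⟨1, (mul_one _).symm⟩, (hxL n).2.1⟩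
    · intro s gg hgg hsum
      exact sum_indep x s gg (fun i hi => hgg i hi)
        (fun i _ j _ hij => hxprod i j hij)
        (fun i _ => (hxL i).2.2) hsum
  obtain ⟨n, x, hGood, hzero⟩ := claim
  refine ⟨∑ i ∈ Finset.range n, x i, ?_, ?_⟩
  · -- the sum is in L
    have : ∀ i ∈ Finset.range n, x i ∈ L := fun i hi =>
      (hGood.1 i (Finset.mem_range.mp hi)).1
    refine Finset.sum_induction x (· ∈ L) (fun a b hb hc => hL.2.1 a hb b hc) hL.1 this
  · intro t ht
    rw [Finset.sum_mul] at ht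
    have := sum_indep x (Finset.range n) (fun i => x i * t)
      (fun i _ => ⟨t, rfl⟩)
      (fun i hi j hj hij => hGood.2 i j hij (Finset.mem_range.mp hj))
      (fun i hi => (hGood.1 i (Finset.mem_range.mp hi)).2.2) ht
    refine hzero t fun i hi => ?_
    exact this i (Finset.mem_range.mpr hi)

end Goldie15

namespace Goldie15

variable {S : Type*} [Ring S]

/-- left annihilator of a set, as a left ideal -/
def lannSub (X : Set S) : Submodule S S where
  carrier := {s | ∀ x ∈ X, s * x = 0}
  add_mem' := by
    intro a b ha hb x hx
    rw [add_mul, ha x hx, hb x hx, add_zero]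
  zero_mem' := by intro x hx; rw [zero_mul]
  smul_mem' := by
    intro c a ha x hx
    show c * a * x = 0
    rw [mul_assoc, ha x hx, mul_zero]

lemma mem_lannSub {X : Set S} {s : S} : s ∈ lannSub X ↔ ∀ x ∈ X, s * x = 0 := Iff.rfl

lemma lannSub_antitone {X Y : Set S} (h : X ⊆ Y) : lannSub Y ≤ lannSub X :=
  fun _ hs x hx => hs x (h hx)

/-- von Neumann regularity of a semisimple ring (via left ideals) -/
theorem vnr [IsSemisimpleRing S] (a : S) : ∃ b : S, a * b * a = a := by
  obtain ⟨q, hq⟩ := exists_isCompl (Submodule.span S {a})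
  have h1 : (1 : S) ∈ Submodule.span S {a} ⊔ q := by rw [hq.sup_eq_top]; trivial
  obtain ⟨y, hy, z, hz, hyz⟩ := Submodule.mem_sup.mp h1
  obtain ⟨w, hw⟩ := Submodule.mem_span_singleton.mp hy
  have haz : a * z ∈ Submodule.span S {a} ⊓ q := by
    constructor
    · have : a * z = a - a * (w * a) := by
        have : a * (y + z) = a := by rw [hyz, mul_one]
        rw [← hw] at this
        simp only [smul_eq_mul] at this
        rw [mul_add] at this
        linear_combination (norm := noncomm_ring) this
      rw [this]
      have : a - a * (w * a) = (1 - a * w) • a := by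
        simp only [smul_eq_mul]; noncomm_ring
      rw [this]
      exact Submodule.smul_mem _ _ (Submodule.mem_span_singleton_self a)
    · exact Submodule.smul_mem q a hz
  rw [hq.inf_eq_bot] at haz
  have haz0 : a * z = 0 := haz
  refine ⟨w, ?_⟩
  have : a * (y + z) = a := by rw [hyz, mul_one]
  rw [mul_add, haz0, add_zero, ← hw] at this
  simp only [smul_eq_mul] at this
  rw [← mul_assoc] at this
  exact this

/-- a finitely generated right ideal of a vN regular ring has a left-identity idempotent -/
theorem fg_idem [IsSemisimpleRing S] (t : Finset S) :
    ∃ e : S, e * e = e ∧ e ∈ Submodule.span Sᵐᵒᵖ (t : Set S) ∧ ∀ x ∈ t, e * x = x := by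
  classical
  induction t using Finset.induction_on with
  | empty => exact ⟨0, by simp, Submodule.zero_mem _, by simp⟩
  | @insert a t hat ih =>
    obtain ⟨e, he2, hespan, heid⟩ := ih
    obtain ⟨b, hb⟩ := vnr (a - e * a)
    have hea' : e * (a - e * a) = 0 := by
      linear_combination (norm := noncomm_ring) - he2 * a
    have hg2 : ((a - e * a) * b) * ((a - e * a) * b) = (a - e * a) * b := by
      linear_combination (norm := noncomm_ring) hb * b
    have heg : e * ((a - e * a) * b) = 0 := by
      linear_combination (norm := noncomm_ring) hea' * b
    have hga' : ((a - e * a) * b) * (a - e * a) = a - e * a := hb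
    set g : S := (a - e * a) * b with hgdef
    have hfe : (e + g - g * e) * e = e := by
      linear_combination (norm := noncomm_ring) he2 - g * he2
    have hfg : (e + g - g * e) * g = g := by
      linear_combination (norm := noncomm_ring) hg2 + heg - g * heg
    have hf2 : (e + g - g * e) * (e + g - g * e) = e + g - g * e := by
      linear_combination (norm := noncomm_ring) hfe + hfg - hfg * e
    have hsubset : (t : Set S) ⊆ ((insert a t : Finset S) : Set S) := by
      intro x hx; simp only [Finset.coe_insert, Set.mem_insert_iff]
      right; exact hx
    have hespan' : e ∈ Submodule.span Sᵐᵒᵖ ((insert a t : Finset S) : Set S) :=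
      Submodule.span_mono hsubset hespan
    have hamem : a ∈ Submodule.span Sᵐᵒᵖ ((insert a t : Finset S) : Set S) :=
      Submodule.subset_span (by simp)
    have hrmul : ∀ z c : S, z ∈ Submodule.span Sᵐᵒᵖ ((insert a t : Finset S) : Set S) →
        z * c ∈ Submodule.span Sᵐᵒᵖ ((insert a t : Finset S) : Set S) := by
      intro z c hz
      have := Submodule.smul_mem (Submodule.span Sᵐᵒᵖ ((insert a t : Finset S) : Set S))
        (MulOpposite.op c) hz
      rwa [MulOpposite.smul_eq_mul_unop, MulOpposite.unop_op] at this
    have hgmem : g ∈ Submodule.span Sᵐᵒᵖ ((insert a t : Finset S) : Set S) := by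
      rw [hgdef]
      exact hrmul _ _ (Submodule.sub_mem _ hamem (hrmul e a hespan'))
    have hfmem : (e + g - g * e) ∈ Submodule.span Sᵐᵒᵖ ((insert a t : Finset S) : Set S) :=
      Submodule.sub_mem _ (Submodule.add_mem _ hespan' hgmem) (hrmul _ _ hgmem)
    refine ⟨e + g - g * e, hf2, hfmem, ?_⟩
    intro x hx
    rcases Finset.mem_insert.mp hx with rfl | hx
    · linear_combination (norm := noncomm_ring) hga'
    · have hex : e * x = x := heid x hx
      linear_combination (norm := noncomm_ring) hex - g * hex

theorem one_mem_span [IsSemisimpleRing S] (X : Set S)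
    (h0 : ∀ s : S, (∀ x ∈ X, s * x = 0) → s = 0) :
    (1 : S) ∈ Submodule.span Sᵐᵒᵖ X := by
  classical
  set F : Set (Submodule S S) :=
    {M | ∃ t : Finset S, (t : Set S) ⊆ (Submodule.span Sᵐᵒᵖ X : Set S) ∧ M = lannSub ↑t} with hF
  have hFne : F.Nonempty := ⟨lannSub (↑(∅ : Finset S)), ∅, by simp, rfl⟩
  obtain ⟨M, hMF, hMmin⟩ := IsArtinian.set_has_minimal F hFne
  obtain ⟨t₀, ht₀sub, rfl⟩ := hMF
  -- M kills every element of the span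
  have hMkill : ∀ s : S, s ∈ lannSub (↑t₀ : Set S) → ∀ a ∈ Submodule.span Sᵐᵒᵖ X, s * a = 0 := by
    intro s hs a haX
    have hsub : ((insert a t₀ : Finset S) : Set S) ⊆ (Submodule.span Sᵐᵒᵖ X : Set S) := by
      intro z hz
      simp only [Finset.coe_insert, Set.mem_insert_iff] at hz
      rcases hz with rfl | hz
      · exact haX
      · exact ht₀sub hz
    have hle : lannSub ((insert a t₀ : Finset S) : Set S) ≤ lannSub (↑t₀ : Set S) :=
      lannSub_antitone (by intro z hz; simp only [Finset.coe_insert, Set.mem_insert_iff]; right; exact hz)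
    have heq : lannSub ((insert a t₀ : Finset S) : Set S) = lannSub (↑t₀ : Set S) := by
      by_contra hne
      exact hMmin _ ⟨insert a t₀, hsub, rfl⟩ (lt_of_le_of_ne hle hne)
    rw [← heq] at hs
    exact hs a (by simp)
  -- hence M = ⊥
  have hMbot : ∀ s : S, s ∈ lannSub (↑t₀ : Set S) → s = 0 := by
    intro s hs
    exact h0 s fun x hx => hMkill s hs x (Submodule.subset_span hx)
  obtain ⟨e, he2, hespan, heid⟩ := fg_idem t₀
  have h1e : (1 : S) - e ∈ lannSub (↑t₀ : Set S) := by
    intro x hx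
    rw [sub_mul, one_mul, heid x hx, sub_self]
  have := hMbot _ h1e
  have he1 : e = 1 := by
    have h5 : (1 : S) - e = 0 := this
    linear_combination (norm := noncomm_ring) -h5
  rw [← he1]
  exact (Submodule.span_le.mpr (by intro z hz; exact ht₀sub hz) : Submodule.span Sᵐᵒᵖ (↑t₀ : Set S) ≤ Submodule.span Sᵐᵒᵖ X) hespan

theorem unit_of_linj [IsSemisimpleRing S] (u : S) (h : ∀ x : S, u * x = 0 → x = 0) :
    IsUnit u := by
  obtain ⟨q, hq⟩ := exists_isCompl (Submodule.span S {u})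
  have h1 : (1 : S) ∈ Submodule.span S {u} ⊔ q := by rw [hq.sup_eq_top]; trivial
  obtain ⟨y, hy, z, hz, hyz⟩ := Submodule.mem_sup.mp h1
  obtain ⟨w, hw⟩ := Submodule.mem_span_singleton.mp hy
  have huz : u * z ∈ Submodule.span S {u} ⊓ q := by
    constructor
    · have h2 : u * z = (1 - u * w) • u := by
        have h3 : u * (y + z) = u := by rw [hyz, mul_one]
        rw [← hw] at h3
        simp only [smul_eq_mul] at h3 ⊢
        linear_combination (norm := noncomm_ring) h3
      rw [h2]
      exact Submodule.smul_mem _ _ (Submodule.mem_span_singleton_self u)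
    · exact Submodule.smul_mem q u hz
  rw [hq.inf_eq_bot] at huz
  have huz0 : u * z = 0 := huz
  have hz0 : z = 0 := h z huz0
  have hwu : w * u = 1 := by
    have : y = 1 := by rw [← hyz, hz0, add_zero]
    rw [← hw, smul_eq_mul] at this
    exact this
  -- right inverse via Noetherianness
  have hsurj : Function.Surjective (LinearMap.toSpanSingleton S S u) := by
    intro z'
    refine ⟨z' * w, ?_⟩
    simp only [LinearMap.toSpanSingleton_apply, smul_eq_mul]
    rw [mul_assoc, hwu, mul_one]
  have hinj := IsNoetherian.injective_of_surjective_endomorphism _ hsurj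
  have huw : u * w = 1 := by
    have h4 : (LinearMap.toSpanSingleton S S u) (u * w - 1) = (LinearMap.toSpanSingleton S S u) 0 := by
      simp only [LinearMap.toSpanSingleton_apply, smul_eq_mul, zero_mul]
      linear_combination (norm := noncomm_ring) u * hwu
    have := hinj h4
    linear_combination (norm := noncomm_ring) this
  exact ⟨⟨u, w, huw, hwu⟩, rfl⟩

end Goldie15

/-- Let `R` be a semiprime right Goldie subring of a semisimple
Artinian ring `S`, and `G` a set of right ideals of `R` such that (a) every `I ∈ G`
has zero left annihilator in `S` and (b) for each `x ∈ S` there is `I ∈ G` with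
`xI ⊆ R`. Then `S` is a classical right quotient ring of `R`, and every right ideal in
`G` contains a regular element of `R`. -/
theorem classical_right_quotient_of_goldie_subring {S : Type*} [Ring S]
    [IsSemisimpleRing S] (R : Subring S)
    (hsp : IsSemiprimeRing R) (hacc : ACCRightAnnihilators R)
    (hud : FiniteRightUniformDim R)
    (G : Set (Set R)) (hGri : ∀ I ∈ G, IsRightIdeal I)
    (ha : ∀ I ∈ G, ∀ s : S, (∀ x ∈ I, s * (x : S) = 0) → s = 0)
    (hb : ∀ s : S, ∃ I ∈ G, ∀ x ∈ I, s * (x : S) ∈ R) :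
    (∀ u : R, IsRegularElem u → IsUnit (u : S)) ∧
    (∀ s : S, ∃ a u : R, IsRegularElem u ∧ s * (u : S) = (a : S)) ∧
    (∀ I ∈ G, ∃ u ∈ I, IsRegularElem u) := by
  classical
  -- lift right-annihilator-freeness from R to S
  have h1 : ∀ c : R, (∀ t : R, c * t = 0 → t = 0) → ∀ x : S, (c : S) * x = 0 → x = 0 := by
    intro c hc x hx
    obtain ⟨J, hJG, hJ⟩ := hb x
    refine ha J hJG x fun y hy => ?_
    have hxy : x * (y : S) ∈ R := hJ y hy
    have ht : (c : R) * ⟨x * (y : S), hxy⟩ = 0 := by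
      apply Subtype.ext
      show (c : S) * (x * (y : S)) = 0
      rw [← mul_assoc, hx, zero_mul]
    have := hc _ ht
    have h2 := congrArg (Subtype.val) this
    exact h2
  have h2 : ∀ c : R, (∀ t : R, c * t = 0 → t = 0) → IsUnit (c : S) :=
    fun c hc => Goldie15.unit_of_linj _ (h1 c hc)
  have h3 : ∀ c : R, IsUnit (c : S) → IsRegularElem c := by
    intro c hu x
    constructor
    · intro hcx
      have hcast : (c : S) * (x : S) = (c : S) * 0 := by
        rw [mul_zero]
        exact_mod_cast congrArg Subtype.val hcx
      exact Subtype.ext (hu.mul_left_cancel hcast)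
    · intro hxc
      have hcast : (x : S) * (c : S) = 0 * (c : S) := by
        rw [zero_mul]
        exact_mod_cast congrArg Subtype.val hxc
      exact Subtype.ext (hu.mul_right_cancel hcast)
  -- regular elements in essential right ideals
  have hreg : ∀ L : Set R, IsRightIdeal L →
      (∀ a : R, a ≠ 0 → ∃ r : R, a * r ∈ L ∧ a * r ≠ 0) →
      ∃ c ∈ L, IsRegularElem c ∧ IsUnit (c : S) := by
    intro L hL hess
    obtain ⟨c, hcL, hc⟩ := Goldie15.essential_regular hsp hacc hud hL hess
    have hu := h2 c hc
    exact ⟨c, hcL, h3 c hu, hu⟩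
  -- single-step essentiality
  have ess_single : ∀ (s₀ : S) (z : R), z ≠ 0 →
      ∃ y : R, s₀ * ((z * y : R) : S) ∈ R ∧ z * y ≠ 0 := by
    intro s₀ z hz
    obtain ⟨J, hJG, hJ⟩ := hb (s₀ * (z : S))
    have hex : ∃ y ∈ J, z * y ≠ 0 := by
      by_contra hno
      push_neg at hno
      refine hz (Subtype.ext ?_)
      refine ha J hJG (z : S) fun y hy => ?_
      have := hno y hy
      exact_mod_cast congrArg Subtype.val this
    obtain ⟨y, hyJ, hne⟩ := hex
    refine ⟨y, ?_, hne⟩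
    have : s₀ * ((z * y : R) : S) = (s₀ * (z : S)) * (y : S) := by
      push_cast
      rw [mul_assoc]
    rw [this]
    exact hJ y hyJ
  -- essentiality of the common-denominator ideal for a finite set of numerators
  have ess_inter : ∀ (t : Finset S) (a : R), a ≠ 0 →
      ∃ r : R, (∀ b ∈ t, b * ((a * r : R) : S) ∈ R) ∧ a * r ≠ 0 := by
    intro t
    induction t using Finset.induction_on with
    | empty =>
      intro a ha0
      exact ⟨1, by simp, by rwa [mul_one]⟩
    | @insert b t hbt ih =>
      intro a ha0
      obtain ⟨r₁, hr₁mem, hr₁ne⟩ := ih a ha0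
      obtain ⟨y, hymem, hyne⟩ := ess_single b (a * r₁) hr₁ne
      refine ⟨r₁ * y, ?_, by rwa [← mul_assoc]⟩
      intro b' hb'
      rcases Finset.mem_insert.mp hb' with rfl | hb'
      · rwa [← mul_assoc]
      · have h5 : b' * ((a * (r₁ * y) : R) : S) = (b' * ((a * r₁ : R) : S)) * (y : S) := by
          push_cast
          noncomm_ring
        rw [h5]
        exact R.mul_mem (hr₁mem b' hb') y.2
  refine ⟨?_, ?_, ?_⟩
  · -- part 1
    intro u hu
    exact h2 u fun t ht => (hu t).1 ht
  · -- part 2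
    intro s
    have hLri : IsRightIdeal {r : R | s * (r : S) ∈ R} := by
      refine ⟨by simpa using R.zero_mem, ?_, ?_⟩
      · intro x hx y hy
        show s * ((x + y : R) : S) ∈ R
        push_cast
        rw [mul_add]
        exact R.add_mem hx hy
      · intro x hx a
        show s * ((x * a : R) : S) ∈ R
        push_cast
        rw [← mul_assoc]
        exact R.mul_mem hx a.2
    have hLess : ∀ a : R, a ≠ 0 → ∃ r : R, a * r ∈ {r : R | s * (r : S) ∈ R} ∧ a * r ≠ 0 := by
      intro a ha0
      obtain ⟨y, hymem, hyne⟩ := ess_single s a ha0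
      exact ⟨y, hymem, hyne⟩
    obtain ⟨c, hcL, hcreg, _⟩ := hreg _ hLri hLess
    exact ⟨⟨s * (c : S), hcL⟩, c, hcreg, rfl⟩
  · -- part 3
    intro I hIG
    set X : Set S := (fun x : R => (x : S)) '' I with hX
    have h0 : ∀ s : S, (∀ x ∈ X, s * x = 0) → s = 0 := by
      intro s hs
      refine ha I hIG s fun x hx => hs _ ⟨x, hx, rfl⟩
    have hone := Goldie15.one_mem_span X h0
    obtain ⟨cf, hsupp, hsum⟩ := Submodule.mem_span_set.mp hone
    set T : Finset S := cf.support.image (fun m => (cf m).unop) with hT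
    have hLri : IsRightIdeal {r : R | ∀ b ∈ T, b * (r : S) ∈ R} := by
      refine ⟨?_, ?_, ?_⟩
      · intro b _
        simpa using R.zero_mem
      · intro x hx y hy b hbT
        show b * ((x + y : R) : S) ∈ R
        push_cast
        rw [mul_add]
        exact R.add_mem (hx b hbT) (hy b hbT)
      · intro x hx a b hbT
        show b * ((x * a : R) : S) ∈ R
        push_cast
        rw [← mul_assoc]
        exact R.mul_mem (hx b hbT) a.2
    have hLess : ∀ a : R, a ≠ 0 →
        ∃ r : R, a * r ∈ {r : R | ∀ b ∈ T, b * (r : S) ∈ R} ∧ a * r ≠ 0 := by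
      intro a ha0
      obtain ⟨r, hrmem, hrne⟩ := ess_inter T a ha0
      exact ⟨r, hrmem, hrne⟩
    obtain ⟨u, huL, hureg, huunit⟩ := hreg _ hLri hLess
    -- write u as an element of I
    have hchoice : ∀ m : S, ∃ x : R, m ∈ cf.support → (x ∈ I ∧ (x : S) = m) := by
      intro m
      by_cases hm : m ∈ cf.support
      · obtain ⟨x, hxI, hxeq⟩ := hsupp hm
        exact ⟨x, fun _ => ⟨hxI, hxeq⟩⟩
      · exact ⟨0, fun h => absurd h hm⟩
    choose xm hxm using hchoice
    have hrmex : ∀ m : S, ∃ r : R, m ∈ cf.support → (r : S) = (cf m).unop * (u : S) := by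
      intro m
      by_cases hm : m ∈ cf.support
      · have hmT : (cf m).unop ∈ T := Finset.mem_image_of_mem _ hm
        exact ⟨⟨_, huL _ hmT⟩, fun _ => rfl⟩
      · exact ⟨0, fun h => absurd h hm⟩
    choose rm hrm using hrmex
    have hsum2 : ((∑ m ∈ cf.support, xm m * rm m : R) : S) = (u : S) := by
      have e1 : ((∑ m ∈ cf.support, xm m * rm m : R) : S)
          = ∑ m ∈ cf.support, (xm m : S) * (rm m : S) := by
        push_cast
        rfl
      rw [e1]
      have e2 : ∀ m ∈ cf.support, (xm m : S) * (rm m : S) = (cf m) • m * (u : S) := by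
        intro m hm
        rw [(hxm m hm).2, hrm m hm, MulOpposite.smul_eq_mul_unop, mul_assoc]
      rw [Finset.sum_congr rfl e2, ← Finset.sum_mul]
      have e4 : (∑ m ∈ cf.support, (cf m) • m) = (1 : S) := by
        simpa [Finsupp.sum] using hsum
      rw [e4, one_mul]
    have hueq : (∑ m ∈ cf.support, xm m * rm m : R) = u := Subtype.ext hsum2
    have huI : u ∈ I := by
      rw [← hueq]
      refine Finset.sum_induction _ (· ∈ I)
        (fun a b ha' hb' => (hGri I hIG).2.1 a ha' b hb') (hGri I hIG).1 ?_
      intro m hm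
      exact (hGri I hIG).2.2 _ (hxm m hm).1 _
    exact ⟨u, huI, hureg⟩
end

section
/- Let H be a residually finite dimensional Hopf algebra over a field k and A a right coideal subalgebra of H. Then A is an H°-prime H°-module algebra: A ≠ 0 and for any two H°-stable two-sided ideals I, J of A (equivalently, ideals that are right coideals of H), if IJ = 0 then I = 0 or J = 0. -/
/-- `H` is residually finite dimensional: its (two-sided) ideals of finite codimension
have zero intersection. -/
def ResiduallyFiniteDimensional (k : Type*) [Field k] (H : Type*) [Ring H]
    [Algebra k H] : Prop :=
  ∀ h : H, h ≠ 0 → ∃ I : Submodule k H,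
    (∀ x ∈ I, ∀ g : H, g * x ∈ I ∧ x * g ∈ I) ∧
    FiniteDimensional k (H ⧸ I) ∧ h ∉ I

/-- A subspace `U` of `H` is a right coideal: `Δ(U) ⊆ U ⊗ H`. -/
def IsRightCoideal (k : Type*) [Field k] {H : Type*} [Ring H] [HopfAlgebra k H]
    (U : Submodule k H) : Prop :=
  ∀ x ∈ U, Coalgebra.comul (R := k) x ∈
    LinearMap.range (TensorProduct.map U.subtype (LinearMap.id (M := H)))

/-- A nonzero right coideal contains an element on which the counit does not vanish. -/
lemma exists_counit_ne_zero (k : Type*) [Field k] {H : Type*} [Ring H] [HopfAlgebra k H]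
    {J : Submodule k H} (hJ : IsRightCoideal k J) (hne : J ≠ ⊥) :
    ∃ y ∈ J, Coalgebra.counit (R := k) y ≠ 0 := by
  by_contra hall
  push_neg at hall
  apply hne
  rw [Submodule.eq_bot_iff]
  intro y hy
  obtain ⟨t, ht⟩ := hJ y hy
  have h1 : (Coalgebra.counit (R := k)).rTensor H (Coalgebra.comul (R := k) y)
      = 1 ⊗ₜ[k] y := Coalgebra.rTensor_counit_comul y
  have h2 : ∀ s : TensorProduct k J H, (Coalgebra.counit (R := k)).rTensor H
      ((TensorProduct.map J.subtype (LinearMap.id (M := H))) s) = 0 := by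
    intro s
    induction s using TensorProduct.induction_on with
    | zero => simp
    | tmul a h =>
        simp only [TensorProduct.map_tmul, LinearMap.rTensor_tmul, LinearMap.id_coe, id_eq,
          Submodule.coe_subtype]
        rw [hall a a.2, TensorProduct.zero_tmul]
    | add u v hu hv => rw [map_add, map_add, hu, hv, add_zero]
  rw [← ht, h2 t] at h1
  have := congrArg (TensorProduct.lid k H) h1.symm
  simpa using this

/-- Let `A` be a right coideal subalgebra of a residually finite
dimensional Hopf algebra `H`. Then `A` is `H°`-prime: `A ≠ 0`, and for any two
two-sided ideals `I, J` of `A` which are right coideals of `H`, `IJ = 0` implies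
`I = 0` or `J = 0`. -/
theorem coideal_subalgebra_hprime (k : Type*) [Field k] {H : Type*}
    [Ring H] [HopfAlgebra k H] (hres : ResiduallyFiniteDimensional k H)
    (A : Subalgebra k H) (hA : IsRightCoideal k (Subalgebra.toSubmodule A)) :
    (∃ a : A, a ≠ 0) ∧
    ∀ I J : Submodule k H,
      I ≤ Subalgebra.toSubmodule A → J ≤ Subalgebra.toSubmodule A →
      (∀ x ∈ I, ∀ a ∈ A, a * x ∈ I ∧ x * a ∈ I) →
      (∀ x ∈ J, ∀ a ∈ A, a * x ∈ J ∧ x * a ∈ J) →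
      IsRightCoideal k I → IsRightCoideal k J →
      (∀ x ∈ I, ∀ y ∈ J, x * y = 0) →
      I = ⊥ ∨ J = ⊥ := by
  constructor
  · refine ⟨1, fun h => ?_⟩
    have h1 : (1 : H) = 0 := congrArg Subtype.val h
    have := congrArg (Coalgebra.counit (R := k)) h1
    simp only [Bialgebra.counit_one, map_zero] at this
    exact one_ne_zero this
  · intro I J hIA hJA hIid hJid hIco hJco hIJ
    by_cases hJ : J = ⊥
    · exact Or.inr hJ
    · left
      obtain ⟨y, hyJ, hεy⟩ := exists_counit_ne_zero k hJco hJ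
      rw [Submodule.eq_bot_iff]
      intro x hx
      obtain ⟨t, ht⟩ := hJco y hyJ
      -- x * (∑ y₁ S(y₂)) = 0 since y₁ ∈ J
      have key : ∀ s : TensorProduct k J H, x * LinearMap.mul' k H
          ((HopfAlgebra.antipode (R := k)).lTensor H
            ((TensorProduct.map J.subtype (LinearMap.id (M := H))) s)) = 0 := by
        intro s
        induction s using TensorProduct.induction_on with
        | zero => simp
        | tmul a h =>
            simp only [TensorProduct.map_tmul, LinearMap.lTensor_tmul, LinearMap.id_coe,
              id_eq, Submodule.coe_subtype, LinearMap.mul'_apply]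
            rw [← mul_assoc, hIJ x hx a a.2, zero_mul]
        | add u v hu hv =>
            rw [map_add, map_add, map_add, mul_add, hu, hv, add_zero]
      have key2 := key t
      rw [ht, HopfAlgebra.mul_antipode_lTensor_comul_apply] at key2
      have hsm : Coalgebra.counit (R := k) y • x = 0 := by
        rw [Algebra.smul_def, Algebra.commutes]
        exact key2
      rcases smul_eq_zero.mp hsm with h | h
      · exact absurd h hεy
      · exact h
end
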